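/- arXiv:2203.10801 — 7 statements merged into one kernel-verified Lean document; each statement's English description precedes it below -/
import Mathlib

section
/- Let G be a finite group and D ⊆ G a set of involutions of G that is stable under conjugation by G, generates G, and satisfies that the order of d*e is at most 3 for all d, e ∈ D (i.e., (G,D) is a 3-transposition group). Let S = {p*q : p, q ∈ D, p ≠ q, p*q = q*p}. Then every element of S has order 2, and for all s, t ∈ S the order of s*t is at most 6 (so the subgroup generated by S, together with S, is a 6-transposition group). -/
/-
Write `s = pq` and `t = ru`. Two elements of `D` either commute or satisfy the braid relation
`ded = ede`. If one of `p, q` commutes with `t` (or one of `r, u` with `s`), then `st = d τ` with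
`d ∈ D` and `τ² = 1`, and `(dτ)² = d · τdτ⁻¹` is a product of two elements of `D`, so `st` has
order at most `6`. Otherwise each of `p, q, r, u` braids with one of the other pair, and up to
symmetry the braid edges form a perfect matching, a path or a `4`-cycle. For a matching,
`st = (pr)(qu)` with commuting factors of order at most `3`. For a path `a - b - c - d`, `st` is
conjugate to the Coxeter element `y = abcd` of type `A₄`; conjugation by `y` shifts
`a ↦ b ↦ c ↦ d`, which yields `y⁵ = (abc)⁴ = 1`. For a `4`-cycle, `r` commutes with `srs` because
`(rs)⁴ = 1` (type `A₃` again), and then `(st)² = A · sA⁻¹s` with `A = (srs)u ∈ DD` and commuting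
factors, so `(st)^(2k) = 1` for `k = orderOf A ≤ 3`.
-/

section Involutions

variable {G : Type*} [Group G]

theorem mul_mul_self_cancel {a : G} (ha : a * a = 1) (x : G) : a * (a * x) = x := by
  rw [← mul_assoc, ha, one_mul]

theorem braid_assoc {a b : G} (h : a * b * a = b * a * b) (x : G) :
    a * (b * (a * x)) = b * (a * (b * x)) := by
  simp only [← mul_assoc, h]

theorem Commute.mul_mul_self_eq_one {a b : G} (h : Commute a b) (ha : a * a = 1)
    (hb : b * b = 1) : a * b * (a * b) = 1 := by
  rw [← pow_two, h.mul_pow, pow_two, pow_two, ha, hb, one_mul]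

theorem pow_three_eq_one_of_braid {a b : G} (ha : a * a = 1) (hb : b * b = 1)
    (hab : a * b * a = b * a * b) : (a * b) ^ 3 = 1 :=
  calc (a * b) ^ 3 = a * b * a * (b * a * b) := by
        simp only [pow_succ, pow_zero, one_mul, mul_assoc]
    _ = 1 := by
        rw [← hab]
        simp only [mul_assoc, mul_mul_self_cancel ha, mul_mul_self_cancel hb, ha]

theorem pow_four_eq_one_of_braid_of_braid {a b c : G} (ha : a * a = 1) (hb : b * b = 1)
    (hc : c * c = 1) (hab : a * b * a = b * a * b) (hbc : b * c * b = c * b * c)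
    (hac : Commute a c) : (a * b * c) ^ 4 = 1 := by
  set z := a * b * c with hz
  have hza (x : G) : z * (a * x) = b * (z * x) := by
    simp only [hz, mul_assoc, hac.symm.left_comm, braid_assoc hab]
  have hzb (x : G) : z * (b * x) = c * (z * x) := by
    simp only [hz, mul_assoc, braid_assoc hbc, hac.left_comm]
  have hzc (x : G) : z * (c * x) = a * (b * x) := by
    simp only [hz, mul_assoc, mul_mul_self_cancel hc]
  calc z ^ 4 = z * (z * (z * (a * (b * (c * 1))))) := by
        simp only [hz, pow_succ, pow_zero, one_mul, mul_one, mul_assoc]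
    _ = (a * b) ^ 3 := by
        simp only [hza, hzb, hzc]
        simp only [pow_succ, pow_zero, one_mul, mul_one, mul_assoc]
    _ = 1 := pow_three_eq_one_of_braid ha hb hab

theorem pow_five_eq_one_of_braid_of_braid_of_braid {a b c d : G} (ha : a * a = 1)
    (hb : b * b = 1) (hc : c * c = 1) (hd : d * d = 1) (hab : a * b * a = b * a * b)
    (hbc : b * c * b = c * b * c) (hcd : c * d * c = d * c * d) (hac : Commute a c)
    (had : Commute a d) (hbd : Commute b d) : (a * b * c * d) ^ 5 = 1 := by
  set y := a * b * c * d with hy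
  have hya (x : G) : y * (a * x) = b * (y * x) := by
    simp only [hy, mul_assoc, had.symm.left_comm, hac.symm.left_comm, braid_assoc hab]
  have hyb (x : G) : y * (b * x) = c * (y * x) := by
    simp only [hy, mul_assoc, hbd.symm.left_comm, braid_assoc hbc, hac.left_comm]
  have hyc (x : G) : y * (c * x) = d * (y * x) := by
    simp only [hy, mul_assoc, braid_assoc hcd, had.left_comm, hbd.left_comm]
  have hyd (x : G) : y * (d * x) = a * (b * (c * x)) := by
    simp only [hy, mul_assoc, mul_mul_self_cancel hd]
  calc y ^ 5 = y * (y * (y * (y * (a * (b * (c * (d * 1))))))) := by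
        simp only [hy, pow_succ, pow_zero, one_mul, mul_one, mul_assoc]
    _ = (a * b * c) ^ 4 := by
        simp only [hya, hyb, hyc, hyd]
        simp only [pow_succ, pow_zero, one_mul, mul_one, mul_assoc]
    _ = 1 := pow_four_eq_one_of_braid_of_braid ha hb hc hab hbc hac

theorem pow_four_mul_mul_eq_one_of_braid_of_braid {p q r : G} (hp : p * p = 1)
    (hq : q * q = 1) (hr : r * r = 1) (hpq : Commute p q) (hpr : p * r * p = r * p * r)
    (hqr : q * r * q = r * q * r) : (r * (p * q)) ^ 4 = 1 := by
  have hconj : r * (p * q) = p * (p * r * q) * p⁻¹ := by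
    rw [inv_eq_of_mul_eq_one_right hp, hpq.eq]
    simp only [mul_assoc, mul_mul_self_cancel hp]
  rw [hconj, conj_pow, pow_four_eq_one_of_braid_of_braid hp hr hq hpr hqr.symm hpq, mul_one,
    mul_inv_cancel]

theorem Commute.conj_of_pow_four_eq_one {r s : G} (hr : r * r = 1) (hs : s * s = 1)
    (h : (r * s) ^ 4 = 1) : Commute r (s * r * s⁻¹) := by
  have hs' := inv_eq_of_mul_eq_one_right hs
  have hsq : (r * s) ^ 2 = (s * r) ^ 2 := by
    have h22 : (r * s) ^ 2 * (r * s) ^ 2 = 1 := by rw [← pow_add]; exact h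
    rw [eq_inv_of_mul_eq_one_left h22, ← inv_pow, mul_inv_rev, hs',
      inv_eq_of_mul_eq_one_right hr]
  calc r * (s * r * s⁻¹) = (r * s) ^ 2 := by rw [hs', pow_two]; simp only [mul_assoc]
    _ = (s * r) ^ 2 := hsq
    _ = s * r * s⁻¹ * r := by rw [hs', pow_two]; simp only [mul_assoc]

theorem orderOf_mul_comm (a b : G) : orderOf (a * b) = orderOf (b * a) := by
  rw [show b * a = MulAut.conj b (a * b) by simp [mul_assoc], MulEquiv.orderOf_eq]

theorem orderOf_mul_eq_two {p q : G} (hp : p * p = 1) (hq : q * q = 1) (hne : p ≠ q)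
    (hpq : Commute p q) : orderOf (p * q) = 2 :=
  orderOf_eq_prime (by rw [pow_two]; exact hpq.mul_mul_self_eq_one hp hq) fun h =>
    hne ((eq_inv_of_mul_eq_one_left h).trans (inv_eq_of_mul_eq_one_right hq))

theorem orderOf_le_two_mul_orderOf_sq [Finite G] (x : G) : orderOf x ≤ 2 * orderOf (x ^ 2) :=
  Nat.le_of_dvd (Nat.mul_pos two_pos (orderOf_pos _))
    (orderOf_dvd_of_pow_eq_one (by rw [pow_mul, pow_orderOf_eq_one]))

theorem orderOf_mul_le_two_mul_orderOf_mul_conj [Finite G] {d t : G} (ht : t * t = 1) :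
    orderOf (d * t) ≤ 2 * orderOf (d * (t * d * t⁻¹)) := by
  have hsq : (d * t) ^ 2 = d * (t * d * t⁻¹) := by
    rw [inv_eq_of_mul_eq_one_right ht, pow_two]
    simp only [mul_assoc]
  simpa only [hsq] using orderOf_le_two_mul_orderOf_sq (d * t)

theorem orderOf_mul_le_six_of_commute [Finite G] {x y : G} (h : Commute x y)
    (hx : orderOf x ≤ 3) (hy : orderOf y ≤ 3) : orderOf (x * y) ≤ 6 := by
  have dvd_six {n : ℕ} (hpos : 0 < n) (hn : n ≤ 3) : n ∣ 6 := by interval_cases n <;> decide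
  exact Nat.le_of_dvd (by norm_num) (h.orderOf_mul_dvd_lcm.trans
    (Nat.lcm_dvd (dvd_six (orderOf_pos x) hx) (dvd_six (orderOf_pos y) hy)))

theorem orderOf_mul_mul_le_five_of_path {a b c d : G} (ha : a * a = 1)
    (hb : b * b = 1) (hc : c * c = 1) (hd : d * d = 1) (hab : a * b * a = b * a * b)
    (hbc : b * c * b = c * b * c) (hcd : c * d * c = d * c * d) (hac : Commute a c)
    (had : Commute a d) (hbd : Commute b d) : orderOf (a * c * (b * d)) ≤ 5 := by
  have hconj : a * c * (b * d) = (b * a) * (a * b * c * d) * (b * a)⁻¹ := by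
    rw [mul_inv_rev, inv_eq_of_mul_eq_one_right ha, inv_eq_of_mul_eq_one_right hb]
    simp only [mul_assoc, mul_mul_self_cancel ha, mul_mul_self_cancel hb]
    simp only [had.symm.left_comm, hac.symm.left_comm, hbd.eq]
  refine orderOf_le_of_pow_eq_one (by norm_num) ?_
  rw [hconj, conj_pow,
    pow_five_eq_one_of_braid_of_braid_of_braid ha hb hc hd hab hbc hcd hac had hbd, mul_one,
    mul_inv_cancel]

theorem orderOf_mul_le_two_mul_of_commute_conj [Finite G] {s r u : G} (hs : s * s = 1)
    (hr : r * r = 1) (hu : u * u = 1) (hru : Commute r u) (hr' : Commute r (s * r * s⁻¹))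
    (hu' : Commute u (s * u * s⁻¹)) :
    orderOf (s * (r * u)) ≤ 2 * orderOf (s * r * s⁻¹ * u) := by
  set A := s * r * s⁻¹ * u
  have hs' := inv_eq_of_mul_eq_one_right hs
  have hr'' (x : G) : r * (s * (r * (s * x))) = s * (r * (s * (r * x))) := by
    simpa only [hs', mul_assoc] using congrArg (· * x) hr'.eq
  have hu'' (x : G) : u * (s * (u * (s * x))) = s * (u * (s * (u * x))) := by
    simpa only [hs', mul_assoc] using congrArg (· * x) hu'.eq
  have hAB : (s * (r * u)) ^ 2 = A * (s * A⁻¹ * s⁻¹) := by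
    simp only [A, mul_inv_rev, hs', inv_eq_of_mul_eq_one_right hr,
      inv_eq_of_mul_eq_one_right hu, pow_two, mul_assoc, hs, mul_one]
    simp only [hu'', mul_mul_self_cancel hs, hru.symm.eq]
  have hBA : (s * (r * u)) ^ 2 = s * A⁻¹ * s⁻¹ * A := by
    simp only [A, mul_inv_rev, hs', inv_eq_of_mul_eq_one_right hr,
      inv_eq_of_mul_eq_one_right hu, pow_two, mul_assoc, mul_mul_self_cancel hs]
    simp only [hr'', mul_mul_self_cancel hs, hru.symm.left_comm]
  have hcomm : Commute A (s * A⁻¹ * s⁻¹) := hAB.symm.trans hBA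
  have hpow : ((s * (r * u)) ^ 2) ^ orderOf A = 1 := by
    rw [hAB, hcomm.mul_pow, conj_pow, inv_pow, pow_orderOf_eq_one, inv_one, mul_one,
      mul_inv_cancel, one_mul]
  exact (orderOf_le_two_mul_orderOf_sq _).trans
    (Nat.mul_le_mul_left 2 (orderOf_le_of_pow_eq_one (orderOf_pos A) hpow))

theorem commute_or_braid_of_orderOf_mul_le_three [Finite G] {d e : G} (hd : d * d = 1)
    (he : e * e = 1) (h : orderOf (d * e) ≤ 3) : Commute d e ∨ d * e * d = e * d * e := by
  have hd' := inv_eq_of_mul_eq_one_right hd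
  have he' := inv_eq_of_mul_eq_one_right he
  obtain h1 | h2 | h3 : orderOf (d * e) = 1 ∨ orderOf (d * e) = 2 ∨ orderOf (d * e) = 3 := by
    have := orderOf_pos (d * e); omega
  · have hed : e = d := (eq_inv_of_mul_eq_one_right (orderOf_eq_one_iff.mp h1)).trans hd'
    exact Or.inl (hed ▸ Commute.refl d)
  · have hsq := pow_orderOf_eq_one (d * e)
    rw [h2, pow_two] at hsq
    refine Or.inl ((inv_eq_of_mul_eq_one_right hsq).symm.trans ?_)
    rw [mul_inv_rev, hd', he']
  · have hcube := pow_orderOf_eq_one (d * e)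
    rw [h3] at hcube
    have hmul : d * e * d * (e * d * e) = 1 := by
      rw [← hcube]; simp only [pow_succ, pow_zero, one_mul, mul_assoc]
    refine Or.inr (Eq.trans ?_ (inv_eq_of_mul_eq_one_right hmul))
    rw [mul_inv_rev, mul_inv_rev, hd', he', mul_assoc]

end Involutions

section ThreeTransposition

variable {G : Type*} [Group G] [Finite G] {D : Set G}

theorem orderOf_mul_mul_le_six_of_commute_mul (hconj : ∀ d ∈ D, ∀ g : G, g * d * g⁻¹ ∈ D)
    (h3 : ∀ d ∈ D, ∀ e ∈ D, orderOf (d * e) ≤ 3) {p q t : G} (hq : q ∈ D) (hp : p * p = 1)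
    (ht : t * t = 1) (hpq : Commute p q) (hpt : Commute p t) : orderOf (p * q * t) ≤ 6 := by
  rw [hpq.eq, mul_assoc]
  have := orderOf_mul_le_two_mul_orderOf_mul_conj (d := q) (hpt.mul_mul_self_eq_one hp ht)
  have := h3 q hq _ (hconj q hq (p * t))
  omega

theorem orderOf_mul_mul_le_six_of_cycle (hconj : ∀ d ∈ D, ∀ g : G, g * d * g⁻¹ ∈ D)
    (h3 : ∀ d ∈ D, ∀ e ∈ D, orderOf (d * e) ≤ 3) {p q r u : G} (hr : r ∈ D) (hu : u ∈ D)
    (hp2 : p * p = 1) (hq2 : q * q = 1) (hr2 : r * r = 1) (hu2 : u * u = 1)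
    (hpq : Commute p q) (hru : Commute r u) (hpr : p * r * p = r * p * r)
    (hpu : p * u * p = u * p * u) (hqr : q * r * q = r * q * r) (hqu : q * u * q = u * q * u) :
    orderOf (p * q * (r * u)) ≤ 6 := by
  have hs := hpq.mul_mul_self_eq_one hp2 hq2
  have := orderOf_mul_le_two_mul_of_commute_conj hs hr2 hu2 hru
    (Commute.conj_of_pow_four_eq_one hr2 hs
      (pow_four_mul_mul_eq_one_of_braid_of_braid hp2 hq2 hr2 hpq hpr hqr))
    (Commute.conj_of_pow_four_eq_one hu2 hs
      (pow_four_mul_mul_eq_one_of_braid_of_braid hp2 hq2 hu2 hpq hpu hqu))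
  have := h3 _ (hconj r hr (p * q)) u hu
  omega

theorem orderOf_mul_mul_le_six_of_braid_of_braid (hconj : ∀ d ∈ D, ∀ g : G, g * d * g⁻¹ ∈ D)
    (h3 : ∀ d ∈ D, ∀ e ∈ D, orderOf (d * e) ≤ 3) {p q r u : G} (hp : p ∈ D) (hq : q ∈ D)
    (hr : r ∈ D) (hu : u ∈ D) (hp2 : p * p = 1) (hq2 : q * q = 1) (hr2 : r * r = 1)
    (hu2 : u * u = 1) (hpq : Commute p q) (hru : Commute r u) (hpr : p * r * p = r * p * r)
    (hqu : q * u * q = u * q * u) (hpu : Commute p u ∨ p * u * p = u * p * u)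
    (hqr : Commute q r ∨ q * r * q = r * q * r) : orderOf (p * q * (r * u)) ≤ 6 := by
  rcases hpu with hpu | hpu <;> rcases hqr with hqr | hqr
  · rw [show p * q * (r * u) = p * r * (q * u) by simp only [mul_assoc, hqr.left_comm]]
    exact orderOf_mul_le_six_of_commute ((hpq.mul_right hpu).mul_left (hqr.symm.mul_right hru))
      (h3 p hp r hr) (h3 q hq u hu)
  · exact (orderOf_mul_mul_le_five_of_path hp2 hr2 hq2 hu2 hpr hqr.symm hqu hpq hpu hru).trans
      (by norm_num)
  · rw [hpq.eq, hru.eq]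
    exact (orderOf_mul_mul_le_five_of_path hq2 hu2 hp2 hr2 hqu hpu.symm hpr hpq.symm hqr
      hru.symm).trans (by norm_num)
  · exact orderOf_mul_mul_le_six_of_cycle hconj h3 hr hu hp2 hq2 hr2 hu2 hpq hru hpr hpu hqr hqu

theorem orderOf_mul_mul_le_six (hsq : ∀ d ∈ D, d * d = 1)
    (hconj : ∀ d ∈ D, ∀ g : G, g * d * g⁻¹ ∈ D) (h3 : ∀ d ∈ D, ∀ e ∈ D, orderOf (d * e) ≤ 3)
    {p q r u : G} (hp : p ∈ D) (hq : q ∈ D) (hr : r ∈ D) (hu : u ∈ D) (hpq : Commute p q)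
    (hru : Commute r u) : orderOf (p * q * (r * u)) ≤ 6 := by
  have hs := hpq.mul_mul_self_eq_one (hsq p hp) (hsq q hq)
  have ht := hru.mul_mul_self_eq_one (hsq r hr) (hsq u hu)
  by_cases hpt : Commute p (r * u)
  · exact orderOf_mul_mul_le_six_of_commute_mul hconj h3 hq (hsq p hp) ht hpq hpt
  by_cases hqt : Commute q (r * u)
  · rw [hpq.eq]
    exact orderOf_mul_mul_le_six_of_commute_mul hconj h3 hp (hsq q hq) ht hpq.symm hqt
  by_cases hrs : Commute r (p * q)
  · rw [orderOf_mul_comm]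
    exact orderOf_mul_mul_le_six_of_commute_mul hconj h3 hu (hsq r hr) hs hru hrs
  by_cases hus : Commute u (p * q)
  · rw [orderOf_mul_comm, hru.eq]
    exact orderOf_mul_mul_le_six_of_commute_mul hconj h3 hr (hsq u hu) hs hru.symm hus
  have dichotomy {d e : G} (hd : d ∈ D) (he : e ∈ D) : Commute d e ∨ d * e * d = e * d * e :=
    commute_or_braid_of_orderOf_mul_le_three (hsq d hd) (hsq e he) (h3 d hd e he)
  have braid_pr_qu := orderOf_mul_mul_le_six_of_braid_of_braid hconj h3 hp hq hr hu (hsq p hp)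
    (hsq q hq) (hsq r hr) (hsq u hu) hpq hru
  have braid_pu_qr := orderOf_mul_mul_le_six_of_braid_of_braid hconj h3 hp hq hu hr (hsq p hp)
    (hsq q hq) (hsq u hu) (hsq r hr) hpq hru.symm
  rw [← hru.eq] at braid_pu_qr
  rcases dichotomy hp hr with hpr | hpr
  · have hpu := (dichotomy hp hu).resolve_left fun h => hpt (hpr.mul_right h)
    have hqr := (dichotomy hq hr).resolve_left fun h => hrs (hpr.symm.mul_right h.symm)
    exact braid_pu_qr hpu hqr (Or.inl hpr) (dichotomy hq hu)
  rcases dichotomy hq hu with hqu | hqu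
  · have hqr := (dichotomy hq hr).resolve_left fun h => hqt (h.mul_right hqu)
    have hpu := (dichotomy hp hu).resolve_left fun h => hus (h.symm.mul_right hqu.symm)
    exact braid_pu_qr hpu hqr (Or.inr hpr) (Or.inl hqu)
  exact braid_pr_qu hpr hqu (dichotomy hp hu) (dichotomy hq hr)

end ThreeTransposition

theorem three_transposition_gives_six_transposition_general
    (G : Type*) [Group G] [Finite G] (D : Set G)
    (hinv : ∀ d ∈ D, orderOf d = 2)
    (hconj : ∀ d ∈ D, ∀ g : G, g * d * g⁻¹ ∈ D)
    (h3 : ∀ d ∈ D, ∀ e ∈ D, orderOf (d * e) ≤ 3)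
    (S : Set G)
    (hS : S = {x : G | ∃ p ∈ D, ∃ q ∈ D, p ≠ q ∧ p * q = q * p ∧ x = p * q}) :
    (∀ s ∈ S, orderOf s = 2) ∧ (∀ s ∈ S, ∀ t ∈ S, orderOf (s * t) ≤ 6) := by
  have hsq (d : G) (hd : d ∈ D) : d * d = 1 := by
    rw [← pow_two, ← hinv d hd, pow_orderOf_eq_one]
  subst hS
  refine ⟨?_, ?_⟩
  · rintro _ ⟨p, hp, q, hq, hne, hpq, rfl⟩
    exact orderOf_mul_eq_two (hsq p hp) (hsq q hq) hne hpq
  · rintro _ ⟨p, hp, q, hq, -, hpq, rfl⟩ _ ⟨r, hr, u, hu, -, hru, rfl⟩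
    exact orderOf_mul_mul_le_six hsq hconj h3 hp hq hr hu hpq hru

/-- If `(G, D)` is a finite 3-transposition group and
`S = {p * q : p, q ∈ D, p ≠ q, p * q = q * p}`, then every element of `S` is an
involution and the order of the product of any two elements of `S` is at most `6`
(so `(⟨S⟩, S)` is a 6-transposition group). -/
theorem three_transposition_gives_six_transposition
    (G : Type*) [Group G] [Finite G] (D : Set G)
    (hinv : ∀ d ∈ D, orderOf d = 2)
    (hconj : ∀ d ∈ D, ∀ g : G, g * d * g⁻¹ ∈ D)
    (hgen : Subgroup.closure D = ⊤)
    (h3 : ∀ d ∈ D, ∀ e ∈ D, orderOf (d * e) ≤ 3)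
    (S : Set G)
    (hS : S = {x : G | ∃ p ∈ D, ∃ q ∈ D, p ≠ q ∧ p * q = q * p ∧ x = p * q}) :
    (∀ s ∈ S, orderOf s = 2) ∧ (∀ s ∈ S, ∀ t ∈ S, orderOf (s * t) ≤ 6) :=
  three_transposition_gives_six_transposition_general G D hinv hconj h3 S hS
end

section
/- Let G be a group, let m ≥ 1, and let d_1, …, d_m ∈ G be pairwise distinct elements, each of order exactly 2, such that d_i * d_{i+1} has order exactly 3 for all 1 ≤ i ≤ m−1, and d_i * d_j = d_j * d_i whenever |i − j| ≥ 2. Then there exists a group isomorphism from the symmetric group S_{m+1} onto the subgroup of G generated by {d_1, …, d_m} which sends the adjacent transposition (i, i+1) to d_i for each 1 ≤ i ≤ m. -/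
/-!
The adjacent transpositions `sᵢ = (i, i+1)` satisfy the Coxeter relations of type `Aₘ`, and the
Coxeter group of type `Aₘ` has at most `(m+1)!` elements: every element is
`sⱼ sⱼ₊₁ ⋯ sₘ₋₁ · h` with `h` in the subgroup generated by `s₀, …, sₘ₋₂`, because left
multiplication by a generator permutes these `m + 1` cosets. Hence that Coxeter group is
`S_{m+1}`, and the chain `d` defines a homomorphism `ψ : S_{m+1} → G` onto `⟨d⟩` with
`ψ sᵢ = dᵢ`.

The kernel of `ψ` is trivial. If `σ ≠ 1` lies in it and moves `a`, then for `c ∉ {a, σ a}`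
the commutator `σ (a c) σ⁻¹ (a c) = (σa σc)(a c)` is a 3-cycle or a product of two disjoint
transpositions lying in the kernel, hence by normality so is `s₀ s₁` or `s₀ s₂`; but their
images `d₀ d₁`, `d₀ d₂` are not `1` since the `dᵢ` are distinct involutions. When no such `c`
exists, `σ` is itself a transposition, conjugate to `s₀`, and `d₀ ≠ 1`.
-/

open Equiv Function

section Involution

variable {G : Type*} [Group G] {a b : G}

theorem mul_pow_two_eq_one_iff_commute (ha : a * a = 1) (hb : b * b = 1) :
    (a * b) ^ 2 = 1 ↔ Commute a b := by
  rw [pow_two, mul_eq_one_iff_eq_inv, mul_inv_rev, inv_eq_of_mul_eq_one_right ha,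
    inv_eq_of_mul_eq_one_right hb]
  rfl

theorem mul_pow_three_eq_one_iff_braid (ha : a * a = 1) (hb : b * b = 1) :
    (a * b) ^ 3 = 1 ↔ a * b * a = b * a * b := by
  have hcube : (a * b) ^ 3 = a * b * a * (b * a * b) := by
    simp only [pow_succ, pow_zero, one_mul, mul_assoc]
  rw [hcube, mul_eq_one_iff_eq_inv, mul_inv_rev, mul_inv_rev, inv_eq_of_mul_eq_one_right ha,
    inv_eq_of_mul_eq_one_right hb, mul_assoc, mul_assoc]

end Involution

structure IsTypeAFamily {W : Type*} [Group W] {n : ℕ} (f : Fin n → W) : Prop where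
  mul_self : ∀ i, f i * f i = 1
  braid : ∀ i j : Fin n, (i : ℕ) + 1 = j → f i * f j * f i = f j * f i * f j
  commute : ∀ i j : Fin n, (i : ℕ) + 2 ≤ j → Commute (f i) (f j)

section IcoProd

variable {W : Type*} [Group W] (s : ℕ → W) {j k n : ℕ}

def icoProd (j n : ℕ) : W := ((List.Ico j n).map s).prod

theorem icoProd_of_le (h : n ≤ j) : icoProd s j n = 1 := by
  simp [icoProd, List.Ico.eq_nil_of_le h]

theorem icoProd_eq_mul (h : j < n) : icoProd s j n = s j * icoProd s (j + 1) n := by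
  simp [icoProd, List.Ico.eq_cons h]

theorem icoProd_append (hjk : j ≤ k) (hkn : k ≤ n) :
    icoProd s j n = icoProd s j k * icoProd s k n := by
  simp only [icoProd, ← List.prod_append, ← List.map_append, List.Ico.append_consecutive hjk hkn]

theorem commute_icoProd {x : W} (h : ∀ k, j ≤ k → k < n → Commute x (s k)) :
    Commute x (icoProd s j n) :=
  Commute.list_prod_right _ _ <| by
    simp only [List.mem_map, List.Ico.mem]
    rintro _ ⟨k, hk, rfl⟩
    exact h k hk.1 hk.2

theorem icoProd_mem_closure : icoProd s j n ∈ Subgroup.closure (s '' Set.Iio n) :=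
  Subgroup.list_prod_mem _ <| by
    simp only [List.mem_map, List.Ico.mem]
    rintro _ ⟨k, hk, rfl⟩
    exact Subgroup.subset_closure ⟨k, hk.2, rfl⟩

end IcoProd

namespace IsTypeAFamily

variable {W : Type*} [Group W] {s : ℕ → W} {n : ℕ}

theorem mono (h : IsTypeAFamily fun i : Fin (n + 1) ↦ s i) :
    IsTypeAFamily fun i : Fin n ↦ s i where
  mul_self i := h.mul_self i.castSucc
  braid i j hij := h.braid i.castSucc j.castSucc hij
  commute i j hij := h.commute i.castSucc j.castSucc hij

theorem mul_icoProd_eq_icoProd_mul {j k : ℕ} (h : IsTypeAFamily fun i : Fin n ↦ s i) (hjk : j ≤ k)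
    (hk : k + 1 < n) : s (k + 1) * icoProd s j n = icoProd s j n * s k := by
  rw [icoProd_append s hjk (by omega : k ≤ n), icoProd_eq_mul s (by omega : k < n),
    icoProd_eq_mul s hk]
  have hA : Commute (s (k + 1)) (icoProd s j k) :=
    commute_icoProd s fun l _ hl ↦ (h.commute ⟨l, by omega⟩ ⟨k + 1, hk⟩ (by simp; omega)).symm
  have hB : Commute (s k) (icoProd s (k + 1 + 1) n) :=
    commute_icoProd s fun l hl hln ↦ h.commute ⟨k, by omega⟩ ⟨l, hln⟩ (by simp; omega)
  have hbraid : s (k + 1) * s k * s (k + 1) = s k * s (k + 1) * s k :=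
    (h.braid ⟨k, by omega⟩ ⟨k + 1, hk⟩ rfl).symm
  calc s (k + 1) * (icoProd s j k * (s k * (s (k + 1) * icoProd s (k + 1 + 1) n)))
      = icoProd s j k * (s (k + 1) * s k * s (k + 1)) * icoProd s (k + 1 + 1) n := by
        rw [← mul_assoc, hA.eq]; group
    _ = icoProd s j k * (s k * s (k + 1)) * (s k * icoProd s (k + 1 + 1) n) := by
        rw [hbraid]; group
    _ = icoProd s j k * (s k * (s (k + 1) * icoProd s (k + 1 + 1) n)) * s k := by
        rw [hB.eq]; group

theorem exists_mul_icoProd_eq (h : IsTypeAFamily fun i : Fin (n + 1) ↦ s i) {i j : ℕ}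
    (hi : i < n + 1) (hj : j ≤ n + 1) :
    ∃ j' ≤ n + 1, ∃ y ∈ Subgroup.closure (s '' Set.Iio n),
      s i * icoProd s j (n + 1) = icoProd s j' (n + 1) * y := by
  have mem (k : ℕ) (hk : k < n) : s k ∈ Subgroup.closure (s '' Set.Iio n) :=
    Subgroup.subset_closure ⟨k, hk, rfl⟩
  rcases lt_trichotomy (i + 1) j with hij | hij | hji
  · refine ⟨j, hj, s i, mem i (by omega), (commute_icoProd s fun l hl hln ↦ ?_).eq⟩
    exact h.commute ⟨i, hi⟩ ⟨l, hln⟩ (by simp; omega)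
  · exact ⟨i, by omega, 1, one_mem _, by rw [mul_one, icoProd_eq_mul s hi, hij]⟩
  · rcases (Nat.lt_succ_iff.mp hji).eq_or_lt with rfl | hji
    · refine ⟨j + 1, hi, 1, one_mem _, ?_⟩
      rw [mul_one, icoProd_eq_mul s hi, ← mul_assoc, h.mul_self ⟨j, hi⟩, one_mul]
    · obtain ⟨k, rfl⟩ : ∃ k, i = k + 1 := ⟨i - 1, by omega⟩
      exact ⟨j, hj, s k, mem k (by omega), h.mul_icoProd_eq_icoProd_mul (by omega) hi⟩

theorem exists_icoProd_mul_eq (h : IsTypeAFamily fun i : Fin (n + 1) ↦ s i) {w : W}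
    (hw : w ∈ Subgroup.closure (s '' Set.Iio (n + 1))) :
    ∃ j ≤ n + 1, ∃ y ∈ Subgroup.closure (s '' Set.Iio n), w = icoProd s j (n + 1) * y := by
  have step (i : ℕ) (hi : i < n + 1) (w : W)
      (hw : ∃ j ≤ n + 1, ∃ y ∈ Subgroup.closure (s '' Set.Iio n), w = icoProd s j (n + 1) * y) :
      ∃ j ≤ n + 1, ∃ y ∈ Subgroup.closure (s '' Set.Iio n), s i * w = icoProd s j (n + 1) * y := by
    obtain ⟨j, hj, y, hy, rfl⟩ := hw
    obtain ⟨j', hj', y', hy', hmul⟩ := h.exists_mul_icoProd_eq hi hj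
    exact ⟨j', hj', y' * y, mul_mem hy' hy, by rw [← mul_assoc, hmul, mul_assoc]⟩
  induction hw using Subgroup.closure_induction_left with
  | one => exact ⟨n + 1, le_rfl, 1, one_mem _, by rw [icoProd_of_le s le_rfl, one_mul]⟩
  | mul_left _ hx w _ ih =>
    obtain ⟨i, hi, rfl⟩ := hx
    exact step i hi w ih
  | inv_mul_cancel _ hx w _ ih =>
    obtain ⟨i, hi, rfl⟩ := hx
    rw [inv_eq_of_mul_eq_one_right (h.mul_self ⟨i, hi⟩)]
    exact step i hi w ih

theorem finite_closure_and_card_le (h : IsTypeAFamily fun i : Fin n ↦ s i) :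
    Finite (Subgroup.closure (s '' Set.Iio n)) ∧
      Nat.card (Subgroup.closure (s '' Set.Iio n)) ≤ (n + 1).factorial := by
  induction n with
  | zero => simpa using (inferInstance : Finite (⊥ : Subgroup W))
  | succ n ih =>
    obtain ⟨hfin, hcard⟩ := ih h.mono
    let f : Fin (n + 2) × Subgroup.closure (s '' Set.Iio n) →
        Subgroup.closure (s '' Set.Iio (n + 1)) := fun p ↦
      ⟨icoProd s p.1 (n + 1) * p.2, mul_mem (icoProd_mem_closure s)
        (Subgroup.closure_mono (Set.image_mono (Set.Iio_subset_Iio n.le_succ)) p.2.2)⟩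
    have hf : Surjective f := by
      rintro ⟨w, hw⟩
      obtain ⟨j, hj, y, hy, rfl⟩ := h.exists_icoProd_mul_eq hw
      exact ⟨(⟨j, by omega⟩, ⟨y, hy⟩), rfl⟩
    refine ⟨Finite.of_surjective f hf, ?_⟩
    calc Nat.card (Subgroup.closure (s '' Set.Iio (n + 1)))
        ≤ (n + 2) * Nat.card (Subgroup.closure (s '' Set.Iio n)) := by
          simpa using Nat.card_le_card_of_surjective f hf
      _ ≤ (n + 2) * (n + 1).factorial := Nat.mul_le_mul_left _ hcard
      _ = (n + 2).factorial := (Nat.factorial_succ _).symm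

end IsTypeAFamily

section AdjacentSwaps

variable {n : ℕ}

theorem isThreeCycle_swap_castSucc_succ_mul {i j : Fin n} (hij : (i : ℕ) + 1 = j) :
    (swap i.castSucc i.succ * swap j.castSucc j.succ).IsThreeCycle := by
  rw [swap_comm, show j.castSucc = i.succ by ext; simp [hij]]
  exact Perm.isThreeCycle_swap_mul_swap_same (by simp [Fin.ext_iff])
    (by simp [Fin.ext_iff]; omega) (by simp [Fin.ext_iff]; omega)

theorem nodup_castSucc_succ {i j : Fin n} (hij : (i : ℕ) + 2 ≤ j) :
    [i.castSucc, i.succ, j.castSucc, j.succ].Nodup := by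
  simp [Fin.ext_iff]; omega

theorem isTypeAFamily_swap_castSucc_succ :
    IsTypeAFamily fun i : Fin n ↦ swap i.castSucc i.succ where
  mul_self _ := swap_mul_self _ _
  braid i j hij := by
    rw [← mul_pow_three_eq_one_iff_braid (swap_mul_self _ _) (swap_mul_self _ _),
      ← (isThreeCycle_swap_castSucc_succ_mul hij).orderOf, pow_orderOf_eq_one]
  commute _ _ hij := (Perm.disjoint_swap_swap (nodup_castSucc_succ hij)).commute

theorem closure_range_swap_castSucc_succ :
    Subgroup.closure (Set.range fun i : Fin n ↦ swap i.castSucc i.succ) = ⊤ :=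
  Subgroup.closure_eq_top_of_mclosure_eq_top (Perm.mclosure_swap_castSucc_succ n)

end AdjacentSwaps

namespace CoxeterMatrix

variable {n : ℕ}

theorem A_isLiftable_iff {G : Type*} [Group G] (f : Fin n → G) :
    (CoxeterMatrix.A n).IsLiftable f ↔ IsTypeAFamily f := by
  have entry (i j : Fin n) : CoxeterMatrix.A n i j =
      if i = j then 1 else if (j : ℕ) + 1 = i ∨ (i : ℕ) + 1 = j then 3 else 2 := rfl
  constructor
  · intro hf
    have hsq (i : Fin n) : f i * f i = 1 := by simpa [entry] using hf i i
    refine ⟨hsq, fun i j hij ↦ ?_, fun i j hij ↦ ?_⟩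
    · rw [← mul_pow_three_eq_one_iff_braid (hsq i) (hsq j)]
      simpa [entry, Fin.ext_iff, hij, show (i : ℕ) ≠ j by omega] using hf i j
    · rw [← mul_pow_two_eq_one_iff_commute (hsq i) (hsq j)]
      have : ¬ (j : ℕ) + 1 = i ∧ ¬ (i : ℕ) + 1 = j := by omega
      simpa [entry, Fin.ext_iff, show (i : ℕ) ≠ j by omega, this] using hf i j
  · intro hf i j
    rw [entry]
    split_ifs with hij hadj
    · subst hij; simpa using hf.mul_self i
    · rw [mul_pow_three_eq_one_iff_braid (hf.mul_self i) (hf.mul_self j)]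
      rcases hadj with hadj | hadj
      · exact (hf.braid j i hadj).symm
      · exact hf.braid i j hadj
    · rw [mul_pow_two_eq_one_iff_commute (hf.mul_self i) (hf.mul_self j)]
      rw [Fin.ext_iff] at hij
      rcases Nat.lt_or_gt_of_ne hij with h | h
      · exact hf.commute i j (by omega)
      · exact (hf.commute j i (by omega)).symm

variable (n)

theorem A_simple_isTypeAFamily : IsTypeAFamily (CoxeterMatrix.A n).toCoxeterSystem.simple :=
  (A_isLiftable_iff _).mp (CoxeterMatrix.A n).toCoxeterSystem.simple_mul_simple_pow

theorem finite_A_group_and_card_le :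
    Finite (CoxeterMatrix.A n).Group ∧ Nat.card (CoxeterMatrix.A n).Group ≤ (n + 1).factorial := by
  let cs := (CoxeterMatrix.A n).toCoxeterSystem
  let s : ℕ → (CoxeterMatrix.A n).Group := extend Fin.val cs.simple 1
  have hs : (fun i : Fin n ↦ s i) = cs.simple := funext (Fin.val_injective.extend_apply _ _)
  have htop : Subgroup.closure (s '' Set.Iio n) = ⊤ := by
    rw [← Fin.range_val, ← Set.range_comp, comp_def, hs, cs.subgroup_closure_range_simple]
  obtain ⟨hfin, hcard⟩ := IsTypeAFamily.finite_closure_and_card_le (hs ▸ A_simple_isTypeAFamily n)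
  rw [htop] at hfin hcard
  rw [Subgroup.card_top] at hcard
  exact ⟨Finite.of_equiv _ Subgroup.topEquiv.toEquiv, hcard⟩

noncomputable def A_toPerm : (CoxeterMatrix.A n).Group →* Perm (Fin (n + 1)) :=
  (CoxeterMatrix.A n).toCoxeterSystem.lift
    ⟨_, (A_isLiftable_iff _).mpr isTypeAFamily_swap_castSucc_succ⟩

theorem A_toPerm_simple (i : Fin n) :
    A_toPerm n ((CoxeterMatrix.A n).toCoxeterSystem.simple i) = swap i.castSucc i.succ :=
  CoxeterSystem.lift_apply_simple _ _ i

theorem A_toPerm_bijective : Bijective (A_toPerm n) := by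
  have hsurj : Surjective (A_toPerm n) := by
    rw [← MonoidHom.range_eq_top, eq_top_iff, ← closure_range_swap_castSucc_succ,
      Subgroup.closure_le]
    rintro _ ⟨i, rfl⟩
    exact ⟨_, A_toPerm_simple n i⟩
  obtain ⟨hfin, hcard⟩ := finite_A_group_and_card_le n
  refine hsurj.bijective_of_nat_card_le ?_
  rwa [Nat.card_perm, Nat.card_fin]

end CoxeterMatrix

theorem IsTypeAFamily.exists_monoidHom_perm {G : Type*} [Group G] {n : ℕ} {f : Fin n → G}
    (hf : IsTypeAFamily f) :
    ∃ ψ : Perm (Fin (n + 1)) →* G, ∀ i, ψ (swap i.castSucc i.succ) = f i := by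
  let cs := (CoxeterMatrix.A n).toCoxeterSystem
  let e := MulEquiv.ofBijective _ (CoxeterMatrix.A_toPerm_bijective n)
  refine ⟨(cs.lift ⟨f, (CoxeterMatrix.A_isLiftable_iff f).mpr hf⟩).comp e.symm.toMonoidHom,
    fun i ↦ ?_⟩
  have : e.symm (swap i.castSucc i.succ) = cs.simple i :=
    e.symm_apply_eq.mpr (CoxeterMatrix.A_toPerm_simple n i).symm
  simp only [MonoidHom.comp_apply, MulEquiv.coe_toMonoidHom, this]
  exact cs.lift_apply_simple _ i

namespace Equiv.Perm

variable {G : Type*} [Group G]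

theorem injective_of_map_ne_one {α : Type*} [DecidableEq α] [Fintype α] (ψ : Perm α →* G)
    (hswap : ∀ σ : Perm α, σ.IsSwap → ψ σ ≠ 1)
    (hthree : ∀ σ : Perm α, σ.IsThreeCycle → ψ σ ≠ 1)
    (hdouble : ∀ σ : Perm α, σ.cycleType = {2, 2} → ψ σ ≠ 1) : Injective ψ := by
  rw [injective_iff_map_eq_one]
  intro σ hσ
  by_contra hne
  obtain ⟨a, ha⟩ : ∃ a, σ a ≠ a := by
    by_contra! h
    exact hne (Perm.ext h)
  by_cases hc : ∃ c, c ≠ a ∧ c ≠ σ a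
  · obtain ⟨c, hca, hcσa⟩ := hc
    have hker : ψ (swap (σ a) (σ c) * swap a c) = 1 := by
      rw [swap_apply_apply, map_mul, map_mul, map_mul, map_inv, hσ, one_mul, inv_one, mul_one,
        ← map_mul, swap_mul_self, map_one]
    by_cases hσca : σ c = a
    · rw [hσca, swap_comm (σ a)] at hker
      exact hthree _ (isThreeCycle_swap_mul_swap_same ha.symm hca.symm hcσa.symm) hker
    by_cases hσcc : σ c = c
    · rw [hσcc, swap_comm _ c, swap_comm a] at hker
      exact hthree _ (isThreeCycle_swap_mul_swap_same hcσa hca ha) hker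
    exact hdouble _ (cycleType_swap_mul_swap_of_nodup (by simp; grind)) hker
  · push Not at hc
    have hσσa : σ (σ a) = a := by
      by_contra h
      exact ha (σ.injective (hc _ h))
    have : σ = swap a (σ a) := by
      ext x
      by_cases hx : x = a
      · simp [hx]
      · simp [hc x hx, hσσa]
    exact hswap σ ⟨a, σ a, ha.symm, this⟩ hσ

variable {n : ℕ}

theorem injective_of_map_swap_castSucc_succ (ψ : Perm (Fin (n + 1)) →* G) {d : Fin n → G}
    (hψ : ∀ i, ψ (swap i.castSucc i.succ) = d i) (hd : Injective d)
    (hsq : ∀ i, d i * d i = 1) (hne : ∀ i, d i ≠ 1) : Injective ψ := by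
  have conj {σ τ : Perm (Fin (n + 1))} (h : IsConj σ τ) (hτ : ψ τ ≠ 1) : ψ σ ≠ 1 :=
    fun hσ ↦ hτ (isConj_one_right.mp (hσ ▸ ψ.map_isConj h))
  have hmul {i j : Fin n} (hij : i ≠ j) :
      ψ (swap i.castSucc i.succ * swap j.castSucc j.succ) ≠ 1 := by
    rw [map_mul, hψ, hψ]
    intro h
    exact hij (hd ((eq_inv_of_mul_eq_one_left h).trans (inv_eq_of_mul_eq_one_right (hsq j))))
  have card_le (σ : Perm (Fin (n + 1))) : σ.cycleType.sum ≤ n + 1 := by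
    simpa using σ.sum_cycleType_le
  apply injective_of_map_ne_one
  · rintro _ ⟨a, b, hab, rfl⟩
    have hn : 0 < n := by
      by_contra!
      exact hab (Fin.ext (by omega))
    refine conj (isConj_swap hab (Fin.castSucc_lt_succ (i := ⟨0, hn⟩)).ne) ?_
    rw [hψ]
    exact hne _
  · intro σ hσ
    have hn : 2 ≤ n := by simpa [hσ.cycleType] using card_le σ
    let i : Fin n := ⟨0, by omega⟩
    let j : Fin n := ⟨1, by omega⟩
    refine conj (isConj_iff_cycleType_eq.mpr ?_) (hmul (i := i) (j := j) (by simp [i, j]))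
    rw [hσ.cycleType, (isThreeCycle_swap_castSucc_succ_mul rfl).cycleType]
  · intro σ hσ
    have hn : 3 ≤ n := by simpa [hσ] using card_le σ
    let i : Fin n := ⟨0, by omega⟩
    let j : Fin n := ⟨2, by omega⟩
    refine conj (isConj_iff_cycleType_eq.mpr ?_) (hmul (i := i) (j := j) (by simp [i, j]))
    rw [hσ, cycleType_swap_mul_swap_of_nodup (nodup_castSucc_succ (i := i) (j := j) le_rfl)]

end Equiv.Perm

theorem chain_generates_symmetric_group_general
    (G : Type*) [Group G] (m : ℕ) (d : Fin m → G)
    (hinj : Function.Injective d)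
    (hord : ∀ i : Fin m, orderOf (d i) = 2)
    (h3 : ∀ i : Fin m, ∀ hi : (i : ℕ) + 1 < m, orderOf (d i * d ⟨(i : ℕ) + 1, hi⟩) = 3)
    (hcomm : ∀ i j : Fin m, (i : ℕ) + 2 ≤ (j : ℕ) → Commute (d i) (d j)) :
    ∃ e : Equiv.Perm (Fin (m + 1)) ≃* Subgroup.closure (Set.range d),
      ∀ i : Fin m, (e (Equiv.swap i.castSucc i.succ) : G) = d i := by
  have hsq (i : Fin m) : d i * d i = 1 := by rw [← pow_two, ← hord i, pow_orderOf_eq_one]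
  have hd : IsTypeAFamily d :=
    { mul_self := hsq
      braid := fun i j hij ↦ by
        have hj : (⟨i + 1, hij ▸ j.isLt⟩ : Fin m) = j := Fin.ext hij
        rw [← mul_pow_three_eq_one_iff_braid (hsq i) (hsq j), ← h3 i (hij ▸ j.isLt), hj,
          pow_orderOf_eq_one]
      commute := hcomm }
  obtain ⟨ψ, hψ⟩ := hd.exists_monoidHom_perm
  have hψinj : Injective ψ := Perm.injective_of_map_swap_castSucc_succ ψ hψ hinj hsq
    fun i h ↦ by simpa [h] using hord i
  have hrange : ψ.range = Subgroup.closure (Set.range d) := by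
    rw [MonoidHom.range_eq_map, ← closure_range_swap_castSucc_succ, MonoidHom.map_closure,
      ← Set.range_comp, comp_def]
    simp only [hψ]
  exact ⟨(MonoidHom.ofInjective hψinj).trans (MulEquiv.subgroupCongr hrange), hψ⟩

/-- A chain of `m` pairwise distinct involutions `d 0, …, d (m-1)` in a
group `G`, with consecutive products of order exactly `3` and non-consecutive members
commuting, generates a subgroup isomorphic to the symmetric group `S (m+1)`, via an
isomorphism sending the adjacent transposition `(i, i+1)` to `d i`. -/
theorem chain_generates_symmetric_group
    (G : Type*) [Group G] (m : ℕ) (hm : 1 ≤ m) (d : Fin m → G)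
    (hinj : Function.Injective d)
    (hord : ∀ i : Fin m, orderOf (d i) = 2)
    (h3 : ∀ i : Fin m, ∀ hi : (i : ℕ) + 1 < m, orderOf (d i * d ⟨(i : ℕ) + 1, hi⟩) = 3)
    (hcomm : ∀ i j : Fin m, (i : ℕ) + 2 ≤ (j : ℕ) → Commute (d i) (d j)) :
    ∃ e : Equiv.Perm (Fin (m + 1)) ≃* Subgroup.closure (Set.range d),
      ∀ i : Fin m, (e (Equiv.swap i.castSucc i.succ) : G) = d i :=
  chain_generates_symmetric_group_general G m d hinj hord h3 hcomm
end

section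
/- Let K be a field, V a vector space over K, and B : V → V → K a bilinear map. Suppose v_1, …, v_{n+1} ∈ V satisfy B(v_i, v_j) = 0 whenever j ≥ i + 2, and B(v_i, v_{i+1}) ≠ 0 for all 1 ≤ i ≤ n. Then the vectors v_1, …, v_n are linearly independent. -/
theorem linearIndependent_of_det_pairing_ne_zero {R M N ι : Type*} [CommRing R] [IsDomain R]
    [AddCommGroup M] [Module R M] [AddCommGroup N] [Module R N] [Fintype ι] [DecidableEq ι]
    (B : M →ₗ[R] N →ₗ[R] R) (u : ι → M) (w : ι → N)
    (h : (Matrix.of fun i j => B (u i) (w j)).det ≠ 0) :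
    LinearIndependent R u :=
  LinearIndependent.of_comp (LinearMap.pi fun j => B.flip (w j))
    (Matrix.linearIndependent_rows_of_det_ne_zero h)

theorem Matrix.det_ne_zero_of_isLowerTriangular {R ι : Type*} [CommRing R] [IsDomain R]
    [Fintype ι] [DecidableEq ι] [LinearOrder ι] {A : Matrix ι ι R} (hA : A.IsLowerTriangular)
    (hdiag : ∀ i, A i i ≠ 0) : A.det ≠ 0 := by
  rw [A.det_of_isLowerTriangular hA]
  exact Finset.prod_ne_zero_iff.mpr fun i _ => hdiag i

/-- the "small lemma". If `v 0, …, v n` are vectors in a vector space `V`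
with a bilinear map `B : V → V → K` such that `B (v i) (v j) = 0` whenever `j ≥ i + 2` and
`B (v i) (v (i+1)) ≠ 0` for all `i`, then `v 0, …, v (n-1)` are linearly independent. -/
theorem chain_linearIndependent
    (K : Type*) [Field K] (V : Type*) [AddCommGroup V] [Module K V]
    (B : V →ₗ[K] V →ₗ[K] K) (n : ℕ) (v : Fin (n + 1) → V)
    (h0 : ∀ i j : Fin (n + 1), (i : ℕ) + 2 ≤ (j : ℕ) → B (v i) (v j) = 0)
    (h1 : ∀ i : Fin n, B (v i.castSucc) (v i.succ) ≠ 0) :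
    LinearIndependent K (fun i : Fin n => v i.castSucc) := by
  -- Pair `v i` against `v (j + 1)`: the resulting square matrix is lower triangular.
  refine linearIndependent_of_det_pairing_ne_zero B _ (fun j : Fin n => v j.succ) ?_
  refine Matrix.det_ne_zero_of_isLowerTriangular (fun i j hij => h0 _ _ ?_) h1
  have : (i : ℕ) < j := hij
  simp only [Fin.val_castSucc, Fin.val_succ]
  omega
end

section
/- Let n ≥ 2 and let V = (Fin (2n) → ZMod 2) with the symplectic bilinear form B(x,y) = Σ_{i=1}^{n} (x_{2i−1} y_{2i} + x_{2i} y_{2i−1}). Then: (a) there exists an injective group homomorphism ψ from the symmetric group S_{2n+2} to the group of linear automorphisms of V such that for every transposition τ ∈ S_{2n+2}, ψ(τ) is a symplectic transvection t_v for some nonzero v ∈ V; and (b) there is no injective group homomorphism from S_{2n+3} to the linear automorphisms of V sending every transposition to a symplectic transvection. (Equivalently, the maximal k such that S_k embeds into Sp_{2n}(2) with all transpositions mapping to transvections is φ(Sp_{2n}(2)) = 2n+2.) -/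
/-- The standard symplectic form on `(ZMod 2)^(2n)`:
`B x y = ∑ i, (x (2i) * y (2i+1) + x (2i+1) * y (2i))` (0-indexed). -/
def sympForm (n : ℕ) (x y : Fin (2 * n) → ZMod 2) : ZMod 2 :=
  ∑ i : Fin n,
    (x ⟨2 * i.1, by have := i.2; omega⟩ * y ⟨2 * i.1 + 1, by have := i.2; omega⟩ +
      x ⟨2 * i.1 + 1, by have := i.2; omega⟩ * y ⟨2 * i.1, by have := i.2; omega⟩)

/-!
`S_{2n+2}` permutes the coordinates of `(ZMod 2)^(2n+2)` preserving the dot product, which is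
alternating on the even-weight vectors with radical spanned by the all-ones vector `1`. The quotient
is a `2n`-dimensional symplectic space, identified with `(ZMod 2)^(2n)` and its standard form
through an explicit symplectic basis; a transposition `(p q)` acts on it as the transvection
along `e_p + e_q`, and the action is faithful as soon as `2n + 2 ≥ 5`.

Conversely, if `S_{2n+3}` embedded, the transvection vectors `u_1, …, u_{2n+2}` of the
transpositions `(0 i)` would pairwise pair to `1`: transvections along orthogonal vectors commute,
while `(0 i)` and `(0 j)` do not. A Gram matrix `J - I` of even size is invertible over `ZMod 2`,
so these `2n + 2` vectors would be linearly independent in a `2n`-dimensional space.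
-/

open Matrix Equiv Function Module

theorem LinearMap.transvection.comp_comm {R V : Type*} [Semiring R] [AddCommMonoid V]
    [Module R V] {f g : Dual R V} {v w : V} (hfw : f w = 0) (hgv : g v = 0) :
    transvection f v ∘ₗ transvection g w = transvection g w ∘ₗ transvection f v := by
  ext x
  simp only [LinearMap.comp_apply, transvection.apply, map_add, map_smul, hfw, hgv, zero_smul,
    add_zero]
  abel

theorem linearIndependent_of_apply_eq_ite {ι M : Type*} [Fintype ι] [DecidableEq ι]
    [AddCommGroup M] [Module (ZMod 2) M] (B : LinearMap.BilinForm (ZMod 2) M) {u : ι → M}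
    (hι : Even (Fintype.card ι)) (hu : ∀ i j, B (u i) (u j) = if i = j then 0 else 1) :
    LinearIndependent (ZMod 2) u := by
  rw [Fintype.linearIndependent_iff]
  intro g hg
  have hpair (j : ι) : ∑ i, g i - g j = 0 := by
    simpa [map_sum, hu, Finset.sum_ite, Finset.filter_ne', Finset.sum_erase_eq_sub] using
      congrArg (B · (u j)) hg
  have hsum : ∑ i, g i = 0 := by
    have hconst : ∑ i, g i = ∑ _j : ι, ∑ i, g i :=
      Finset.sum_congr rfl fun j _ => (sub_eq_zero.mp (hpair j)).symm
    rw [hconst, Finset.sum_const, Finset.card_univ, ← Nat.cast_smul_eq_nsmul (ZMod 2),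
      (ZMod.natCast_eq_zero_iff_even).mpr hι, zero_smul]
  intro j
  simpa [hsum] using hpair j

theorem Equiv.eq_of_swap_mul_swap_comm {α : Type*} [DecidableEq α] {a b c : α} (hb : b ≠ a)
    (hc : c ≠ a) (h : swap a b * swap a c = swap a c * swap a b) : b = c := by
  by_contra hbc
  simpa [swap_apply_of_ne_of_ne hc (Ne.symm hbc), swap_apply_of_ne_of_ne hb hbc, Ne.symm hbc]
    using congrArg (· a) h

section Pairs

variable {α : Type*} [Fintype α]

theorem Finset.exists_notMem_of_card_lt {s : Finset α} (h : s.card < Fintype.card α) :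
    ∃ r, r ∉ s := by
  obtain ⟨r, -, hr⟩ := Finset.exists_mem_notMem_of_card_lt_card (t := Finset.univ) h
  exact ⟨r, hr⟩

variable [DecidableEq α]

theorem Equiv.Perm.eq_one_of_forall_apply_eq_or_eq (hα : 2 < Fintype.card α) {σ : Perm α}
    (h : ∀ p q, p ≠ q → σ p = p ∨ σ p = q) : σ = 1 := by
  ext p
  obtain ⟨q, hq⟩ := Finset.exists_notMem_of_card_lt (s := {p})
    (by rw [Finset.card_singleton]; omega)
  obtain ⟨r, hr⟩ := Finset.exists_notMem_of_card_lt (s := {p, q})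
    (Finset.card_le_two.trans_lt hα)
  simp only [Finset.mem_insert, Finset.mem_singleton, not_or] at hq hr
  rcases h p q (Ne.symm hq) with hpq | hpq
  · exact hpq
  rcases h p r (Ne.symm hr.1) with hpr | hpr
  · exact hpr
  exact absurd (hpq.symm.trans hpr) (Ne.symm hr.2)

theorem single_add_single_ne_smul_one (hα : 2 < Fintype.card α) {p q : α} (hpq : p ≠ q)
    (c : ZMod 2) : Pi.single p 1 + Pi.single q 1 ≠ c • (1 : α → ZMod 2) := by
  intro h
  obtain ⟨r, hr⟩ := Finset.exists_notMem_of_card_lt (s := {p, q})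
    (Finset.card_le_two.trans_lt hα)
  simp only [Finset.mem_insert, Finset.mem_singleton, not_or] at hr
  have hc : c = 0 := by simpa [hr.1, hr.2] using (congrFun h r).symm
  simpa [hpq, hc] using congrFun h p

theorem eq_or_eq_of_single_add_single_eq (hα : 4 < Fintype.card α) {a b p q : α} (hab : a ≠ b)
    {c : ZMod 2} (h : Pi.single a 1 + Pi.single b 1 =
      Pi.single p 1 + Pi.single q 1 + c • (1 : α → ZMod 2)) :
    a = p ∨ a = q := by
  obtain ⟨r, hr⟩ := Finset.exists_notMem_of_card_lt (s := {a, b, p, q})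
    (Finset.card_le_four.trans_lt hα)
  simp only [Finset.mem_insert, Finset.mem_singleton, not_or] at hr
  have hc : c = 0 := by
    simpa [Pi.single_apply, hr.1, hr.2.1, hr.2.2.1, hr.2.2.2] using (congrFun h r).symm
  by_contra! ha
  simpa [hab, ha.1, ha.2, hc] using congrFun h a

end Pairs

section PermAct

variable {α : Type*}

/-- `σ` moves the coordinate at `j` to `σ j`. -/
def permAct (σ : Perm α) : (α → ZMod 2) →ₗ[ZMod 2] (α → ZMod 2) :=
  LinearMap.funLeft (ZMod 2) (ZMod 2) ⇑σ⁻¹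

theorem permAct_apply (σ : Perm α) (w : α → ZMod 2) (j : α) :
    permAct σ w j = w (σ⁻¹ j) :=
  rfl

theorem permAct_mul (σ τ : Perm α) (w : α → ZMod 2) :
    permAct (σ * τ) w = permAct σ (permAct τ w) := rfl

theorem permAct_smul_one (σ : Perm α) (c : ZMod 2) : permAct σ (c • 1) = c • 1 := rfl

theorem sum_permAct [Fintype α] (σ : Perm α) (w : α → ZMod 2) :
    ∑ j, permAct σ w j = ∑ j, w j :=
  Equiv.sum_comp σ⁻¹ w

variable [DecidableEq α]

theorem permAct_single (σ : Perm α) (p : α) :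
    permAct σ (Pi.single p 1) = Pi.single (σ p) 1 := by
  ext j
  simp [permAct_apply, Pi.single_apply, Equiv.eq_symm_apply, eq_comm]

theorem permAct_swap [Fintype α] {p q : α} (hpq : p ≠ q) (w : α → ZMod 2) :
    permAct (swap p q) w =
      w + (w ⬝ᵥ (Pi.single p 1 + Pi.single q 1)) • (Pi.single p 1 + Pi.single q 1) := by
  ext j
  rw [permAct_apply, swap_inv]
  simp only [dotProduct_add, dotProduct_single_one, Pi.add_apply, Pi.smul_apply, Pi.single_apply,
    smul_eq_mul]
  rcases eq_or_ne j p with rfl | hjp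
  · simp [hpq, ← add_assoc, ZModModule.add_self]
  rcases eq_or_ne j q with rfl | hjq
  · simp [hjp, add_comm (w p), ← add_assoc, ZModModule.add_self]
  · simp [swap_apply_of_ne_of_ne hjp hjq, hjp, hjq]

end PermAct

theorem ZMod.natCast_two_eq_ite (t : ℕ) : (t : ZMod 2) = if t % 2 = 0 then 0 else 1 := by
  rw [← ZMod.natCast_mod]
  split_ifs with h
  · simp [h]
  · simp [Nat.mod_two_ne_zero.mp h]

def intervalVec (m a c : ℕ) : Fin m → ZMod 2 :=
  fun j => if a ≤ j.val ∧ j.val ≤ c then 1 else 0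

theorem sum_intervalVec {m a c : ℕ} (hc : c < m) :
    ∑ j, intervalVec m a c j = ((c + 1 - a : ℕ) : ZMod 2) := by
  simp only [intervalVec]
  rw [Fin.sum_univ_eq_sum_range (fun j => if a ≤ j ∧ j ≤ c then (1 : ZMod 2) else 0),
    Finset.sum_boole, ← Nat.card_Icc]
  congr 2
  ext j
  simp only [Finset.mem_filter, Finset.mem_range, Finset.mem_Icc]
  omega

theorem intervalVec_dotProduct {m a c a' c' : ℕ} (hc : c < m) (hc' : c' < m) :
    intervalVec m a c ⬝ᵥ intervalVec m a' c' = ((min c c' + 1 - max a a' : ℕ) : ZMod 2) := by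
  rw [← sum_intervalVec (by omega : min c c' < m)]
  refine Finset.sum_congr rfl fun j _ => ?_
  simp only [intervalVec, mul_ite, mul_one, mul_zero]
  split_ifs <;> first | rfl | omega

theorem Fin.sum_univ_two_mul {M : Type*} [AddCommMonoid M] {n : ℕ} (f : Fin (2 * n) → M) :
    ∑ k, f k = ∑ i : Fin n, (f ⟨2 * i, by omega⟩ + f ⟨2 * i + 1, by omega⟩) := by
  rw [← (finProdFinEquiv.trans (finCongr (Nat.mul_comm n 2))).sum_comp, Fintype.sum_prod_type]
  refine Finset.sum_congr rfl fun i _ => ?_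
  simp [Fin.sum_univ_two, finProdFinEquiv, add_comm]

def pairSwap (n : ℕ) (k : Fin (2 * n)) : Fin (2 * n) :=
  ⟨if k.val % 2 = 0 then k.val + 1 else k.val - 1, by split_ifs <;> omega⟩

theorem pairSwap_pairSwap {n : ℕ} (k : Fin (2 * n)) : pairSwap n (pairSwap n k) = k := by
  ext
  simp only [pairSwap]
  split_ifs <;> omega

section

variable {n : ℕ}

theorem sympForm_eq_dotProduct (x y : Fin (2 * n) → ZMod 2) :
    sympForm n x y = x ⬝ᵥ (y ∘ pairSwap n) := by
  rw [dotProduct, Fin.sum_univ_two_mul, sympForm]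
  refine Finset.sum_congr rfl fun i _ => ?_
  simp [pairSwap, Nat.mul_mod_right, Nat.add_mod]

theorem sympForm_comm (x y : Fin (2 * n) → ZMod 2) : sympForm n x y = sympForm n y x :=
  Finset.sum_congr rfl fun _ _ => by ring

theorem sympForm_self (x : Fin (2 * n) → ZMod 2) : sympForm n x x = 0 :=
  Finset.sum_eq_zero fun _ _ => by rw [mul_comm, ZModModule.add_self]

def sympBilin (n : ℕ) : LinearMap.BilinForm (ZMod 2) (Fin (2 * n) → ZMod 2) :=
  (dotProductBilin (ZMod 2) (ZMod 2)).compl₂ (LinearMap.funLeft (ZMod 2) (ZMod 2) (pairSwap n))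

theorem sympBilin_apply (x y : Fin (2 * n) → ZMod 2) : sympBilin n x y = sympForm n x y := by
  rw [sympForm_eq_dotProduct]
  rfl

theorem sympTransvection_comm {u v : Fin (2 * n) → ZMod 2} (h : sympForm n u v = 0) :
    LinearMap.transvection ((sympBilin n).flip u) u ∘ₗ
        LinearMap.transvection ((sympBilin n).flip v) v =
      LinearMap.transvection ((sympBilin n).flip v) v ∘ₗ
        LinearMap.transvection ((sympBilin n).flip u) u := by
  refine LinearMap.transvection.comp_comm ?_ ?_ <;>
    rw [LinearMap.BilinForm.flip_apply, sympBilin_apply]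
  exacts [sympForm_comm u v ▸ h, h]

/-- Row `2i` is `e 0 + ⋯ + e (2i+1)` and row `2i+1` is `e (2i+1) + e (2i+2)`. Modulo `1` these
represent a symplectic basis of the even-weight vectors (the last coordinate is never used), and
row `pairSwap n k` is dual to row `k` under the dot product. -/
def sympFrame (n : ℕ) : Matrix (Fin (2 * n)) (Fin (2 * n + 2)) (ZMod 2) :=
  Matrix.of fun k => intervalVec (2 * n + 2) (if k.val % 2 = 0 then 0 else k.val) (k.val + 1)

theorem sympFrame_row (k : Fin (2 * n)) :
    sympFrame n k = intervalVec (2 * n + 2) (if k.val % 2 = 0 then 0 else k.val) (k.val + 1) :=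
  rfl

theorem sympFrame_mulVec_pairSwap (k : Fin (2 * n)) :
    sympFrame n *ᵥ sympFrame n (pairSwap n k) = Pi.single k 1 := by
  ext l
  rw [mulVec, sympFrame_row, sympFrame_row, intervalVec_dotProduct (by omega) (by omega),
    ZMod.natCast_two_eq_ite, Pi.single_apply]
  obtain ⟨a, ha⟩ := l
  obtain ⟨b, hb⟩ := k
  simp only [pairSwap, Fin.mk.injEq, Nat.min_def, Nat.max_def]
  split_ifs <;> first | rfl | omega

theorem sympFrame_mulVec_one : sympFrame n *ᵥ 1 = 0 := by
  ext k
  rw [mulVec, dotProduct_one, sympFrame_row, sum_intervalVec (by omega),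
    ZMod.natCast_two_eq_ite, if_pos (by split_ifs <;> omega)]
  rfl

theorem sympFrame_mulVec_single_last : sympFrame n *ᵥ Pi.single (Fin.last _) 1 = 0 := by
  ext k
  rw [mulVec_single_one, col_apply, sympFrame_row, intervalVec, if_neg (by simp)]
  rfl

def sympEmbed (n : ℕ) : (Fin (2 * n) → ZMod 2) →ₗ[ZMod 2] (Fin (2 * n + 2) → ZMod 2) :=
  (sympFrame n).vecMulLinear

def sympProj (n : ℕ) : (Fin (2 * n + 2) → ZMod 2) →ₗ[ZMod 2] (Fin (2 * n) → ZMod 2) :=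
  LinearMap.funLeft (ZMod 2) (ZMod 2) (pairSwap n) ∘ₗ (sympFrame n).mulVecLin

theorem sympProj_apply (w : Fin (2 * n + 2) → ZMod 2) (k : Fin (2 * n)) :
    sympProj n w k = (sympFrame n *ᵥ w) (pairSwap n k) :=
  rfl

theorem sympProj_sympEmbed (x : Fin (2 * n) → ZMod 2) : sympProj n (sympEmbed n x) = x := by
  ext k
  rw [sympProj_apply, sympEmbed, vecMulLinear_apply, ← mulVec_transpose]
  change sympFrame n (pairSwap n k) ⬝ᵥ _ = _
  rw [dotProduct_mulVec, vecMul_transpose, sympFrame_mulVec_pairSwap, single_one_dotProduct]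

theorem sympProj_one : sympProj n 1 = 0 := by
  ext k
  rw [sympProj_apply, sympFrame_mulVec_one]
  rfl

theorem sympProj_single_last : sympProj n (Pi.single (Fin.last _) 1) = 0 := by
  ext k
  rw [sympProj_apply, sympFrame_mulVec_single_last]
  rfl

theorem sympEmbed_dotProduct (x : Fin (2 * n) → ZMod 2) (w : Fin (2 * n + 2) → ZMod 2) :
    sympEmbed n x ⬝ᵥ w = sympForm n x (sympProj n w) := by
  have hw : sympProj n w ∘ pairSwap n = sympFrame n *ᵥ w := funext fun k => by
    rw [Function.comp_apply, sympProj_apply, pairSwap_pairSwap]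
  rw [sympForm_eq_dotProduct, hw, dotProduct_mulVec]
  rfl

theorem sum_sympEmbed (x : Fin (2 * n) → ZMod 2) : ∑ j, sympEmbed n x j = 0 := by
  rw [← dotProduct_one, sympEmbed_dotProduct, sympProj_one, sympForm_eq_dotProduct]
  exact dotProduct_zero x

theorem exists_eq_smul_one_of_sympProj_eq_zero {u : Fin (2 * n + 2) → ZMod 2}
    (hu : sympProj n u = 0) (hsum : ∑ j, u j = 0) : ∃ c : ZMod 2, u = c • 1 := by
  set v : Fin 2 → Fin (2 * n + 2) → ZMod 2 := ![1, Pi.single (Fin.last _) 1]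
  have hv : LinearIndependent (ZMod 2) v := by
    refine LinearIndependent.pair_iff.mpr fun s t hst => ?_
    have hs : s = 0 := by simpa [v, Fin.ext_iff] using congrFun hst 0
    exact ⟨hs, by simpa [v, hs] using congrFun hst (Fin.last _)⟩
  have hker : finrank (ZMod 2) (LinearMap.ker (sympProj n)) = 2 := by
    have := LinearMap.finrank_range_add_finrank_ker (sympProj n)
    rw [LinearMap.range_eq_top.mpr (LeftInverse.surjective sympProj_sympEmbed), finrank_top,
      finrank_fin_fun, finrank_fin_fun] at this
    omega
  have hspan : Submodule.span (ZMod 2) (Set.range v) = LinearMap.ker (sympProj n) := by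
    refine Submodule.eq_of_le_of_finrank_eq ?_ (by rw [finrank_span_eq_card hv, hker]; rfl)
    rw [Submodule.span_le, Set.range_subset_iff]
    intro i
    fin_cases i
    · exact sympProj_one
    · exact sympProj_single_last
  obtain ⟨c, rfl⟩ := (Submodule.mem_span_range_iff_exists_fun (ZMod 2)).mp
    (hspan ▸ hu : u ∈ Submodule.span (ZMod 2) (Set.range v))
  have hc1 : c 1 = 0 := by
    have h2 : (2 : ZMod 2) = 0 := rfl
    simpa [v, Fin.sum_univ_two, Finset.sum_add_distrib, h2, Pi.single_apply] using hsum
  exact ⟨c 0, by simp [v, Fin.sum_univ_two, hc1]⟩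

theorem exists_sympEmbed_sympProj_eq_add_smul_one {w : Fin (2 * n + 2) → ZMod 2}
    (hw : ∑ j, w j = 0) : ∃ c : ZMod 2, sympEmbed n (sympProj n w) = w + c • 1 := by
  refine (exists_eq_smul_one_of_sympProj_eq_zero (u := sympEmbed n (sympProj n w) - w) ?_ ?_).imp
    fun c hc => by rw [← hc, add_sub_cancel]
  · rw [map_sub, sympProj_sympEmbed, sub_self]
  · simp [Finset.sum_sub_distrib, sum_sympEmbed, hw]

theorem sympProj_permAct_sympEmbed_sympProj (σ : Perm (Fin (2 * n + 2)))
    {w : Fin (2 * n + 2) → ZMod 2} (hw : ∑ j, w j = 0) :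
    sympProj n (permAct σ (sympEmbed n (sympProj n w))) = sympProj n (permAct σ w) := by
  obtain ⟨c, hc⟩ := exists_sympEmbed_sympProj_eq_add_smul_one hw
  rw [hc, map_add, permAct_smul_one, map_add, map_smul, sympProj_one, smul_zero, add_zero]

noncomputable def sympRep (n : ℕ) :
    Perm (Fin (2 * n + 2)) →* Module.End (ZMod 2) (Fin (2 * n) → ZMod 2) where
  toFun σ := sympProj n ∘ₗ permAct σ ∘ₗ sympEmbed n
  map_one' := LinearMap.ext sympProj_sympEmbed
  map_mul' σ τ := LinearMap.ext fun x => by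
    have hsum : ∑ j, permAct τ (sympEmbed n x) j = 0 := by rw [sum_permAct, sum_sympEmbed]
    simp only [LinearMap.comp_apply, Module.End.mul_apply,
      sympProj_permAct_sympEmbed_sympProj σ hsum, permAct_mul]

theorem sympRep_apply (σ : Perm (Fin (2 * n + 2))) (x : Fin (2 * n) → ZMod 2) :
    sympRep n σ x = sympProj n (permAct σ (sympEmbed n x)) :=
  rfl

theorem sympRep_swap {p q : Fin (2 * n + 2)} (hpq : p ≠ q) (x : Fin (2 * n) → ZMod 2) :
    sympRep n (swap p q) x =
      x + sympForm n x (sympProj n (Pi.single p 1 + Pi.single q 1)) •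
        sympProj n (Pi.single p 1 + Pi.single q 1) := by
  rw [sympRep_apply, permAct_swap hpq, map_add, map_smul, sympProj_sympEmbed,
    sympEmbed_dotProduct]

theorem sympProj_single_add_single_ne_zero (hn : 0 < n) {p q : Fin (2 * n + 2)} (hpq : p ≠ q) :
    sympProj n (Pi.single p 1 + Pi.single q 1) ≠ 0 := by
  intro h
  obtain ⟨c, hc⟩ := exists_eq_smul_one_of_sympProj_eq_zero h
    (by simp [Finset.sum_add_distrib, ZModModule.add_self])
  exact single_add_single_ne_smul_one (by rw [Fintype.card_fin]; omega) hpq c hc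

theorem exists_permAct_eq_add_smul_one_of_sympRep_eq_one {σ : Perm (Fin (2 * n + 2))}
    (hσ : sympRep n σ = 1) {w : Fin (2 * n + 2) → ZMod 2} (hw : ∑ j, w j = 0) :
    ∃ c : ZMod 2, permAct σ w = w + c • 1 := by
  have hfix : sympProj n (permAct σ w) = sympProj n w := by
    rw [← sympProj_permAct_sympEmbed_sympProj σ hw, ← sympRep_apply, hσ, Module.End.one_apply]
  refine (exists_eq_smul_one_of_sympProj_eq_zero (u := permAct σ w - w) ?_ ?_).imp
    fun c hc => by rw [← hc, add_sub_cancel]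
  · rw [map_sub, hfix, sub_self]
  · simp [Finset.sum_sub_distrib, sum_permAct]

theorem sympRep_injective (hn : 2 ≤ n) : Injective (sympRep n) := by
  refine (injective_iff_map_eq_one _).mpr fun σ hσ =>
    Equiv.Perm.eq_one_of_forall_apply_eq_or_eq (by rw [Fintype.card_fin]; omega) fun p q hpq => ?_
  obtain ⟨c, hc⟩ := exists_permAct_eq_add_smul_one_of_sympRep_eq_one hσ
    (w := Pi.single p 1 + Pi.single q 1) (by simp [Finset.sum_add_distrib, ZModModule.add_self])
  rw [map_add, permAct_single, permAct_single] at hc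
  exact eq_or_eq_of_single_add_single_eq (by rw [Fintype.card_fin]; omega) (σ.injective.ne hpq) hc

noncomputable def sympRepEquiv (n : ℕ) :
    Perm (Fin (2 * n + 2)) →*
      ((Fin (2 * n) → ZMod 2) ≃ₗ[ZMod 2] (Fin (2 * n) → ZMod 2)) :=
  (LinearMap.GeneralLinearGroup.generalLinearEquiv _ _).toMonoidHom.comp (sympRep n).toHomUnits

theorem sympRepEquiv_injective (hn : 2 ≤ n) : Injective (sympRepEquiv n) :=
  (LinearMap.GeneralLinearGroup.generalLinearEquiv _ _).injective.comp
    fun _ _ h => sympRep_injective hn (congrArg Units.val h)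

end

theorem not_exists_sympTransvection_embedding (n : ℕ) :
    ¬ ∃ ψ : Perm (Fin (2 * n + 3)) →*
        ((Fin (2 * n) → ZMod 2) ≃ₗ[ZMod 2] (Fin (2 * n) → ZMod 2)),
      Injective ψ ∧
      ∀ τ : Perm (Fin (2 * n + 3)), τ.IsSwap →
        ∃ v : Fin (2 * n) → ZMod 2, v ≠ 0 ∧
          ∀ w, (ψ τ) w = w + sympForm n w v • v := by
  rintro ⟨ψ, hψ, htrans⟩
  choose u _ hu using fun i : Fin (2 * n + 2) =>
    htrans (swap 0 i.succ) ⟨0, i.succ, (Fin.succ_ne_zero i).symm, rfl⟩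
  have hψu (i : Fin (2 * n + 2)) : (ψ (swap 0 i.succ) : _ →ₗ[ZMod 2] _) =
      LinearMap.transvection ((sympBilin n).flip (u i)) (u i) :=
    LinearMap.ext fun w => by
      rw [LinearEquiv.coe_coe, hu, LinearMap.transvection.apply, LinearMap.BilinForm.flip_apply,
        sympBilin_apply]
  have hpair (i j : Fin (2 * n + 2)) : sympBilin n (u i) (u j) = if i = j then 0 else 1 := by
    rw [sympBilin_apply]
    split_ifs with hij
    · rw [hij, sympForm_self]
    have hle : ∀ a : ZMod 2, a ≠ 0 → a = 1 := by decide
    refine hle _ fun h0 => hij (Fin.succ_injective _ (eq_of_swap_mul_swap_comm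
      (Fin.succ_ne_zero i) (Fin.succ_ne_zero j) (hψ (LinearEquiv.toLinearMap_injective ?_))))
    rw [map_mul, map_mul, LinearEquiv.coe_toLinearMap_mul, LinearEquiv.coe_toLinearMap_mul,
      hψu, hψu, Module.End.mul_eq_comp, Module.End.mul_eq_comp, sympTransvection_comm h0]
  have hcard := (linearIndependent_of_apply_eq_ite (sympBilin n) (by simp [Nat.even_add]) hpair)
    |>.fintype_card_le_finrank
  simp at hcard

/-- `φ(Sp_{2n}(2)) = 2n + 2` for `n ≥ 2`: the symmetric group `S (2n+2)`
embeds into `Sp_{2n}(2)` with all transpositions going to symplectic transvections, while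
`S (2n+3)` does not. -/
theorem phi_symplectic (n : ℕ) (hn : 2 ≤ n) :
    (∃ ψ : Equiv.Perm (Fin (2 * n + 2)) →*
        ((Fin (2 * n) → ZMod 2) ≃ₗ[ZMod 2] (Fin (2 * n) → ZMod 2)),
      Function.Injective ψ ∧
      ∀ τ : Equiv.Perm (Fin (2 * n + 2)), τ.IsSwap →
        ∃ v : Fin (2 * n) → ZMod 2, v ≠ 0 ∧
          ∀ w, (ψ τ) w = w + sympForm n w v • v) ∧
    ¬ (∃ ψ : Equiv.Perm (Fin (2 * n + 3)) →*
        ((Fin (2 * n) → ZMod 2) ≃ₗ[ZMod 2] (Fin (2 * n) → ZMod 2)),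
      Function.Injective ψ ∧
      ∀ τ : Equiv.Perm (Fin (2 * n + 3)), τ.IsSwap →
        ∃ v : Fin (2 * n) → ZMod 2, v ≠ 0 ∧
          ∀ w, (ψ τ) w = w + sympForm n w v • v) := by
  refine ⟨⟨sympRepEquiv n, sympRepEquiv_injective hn, ?_⟩,
    not_exists_sympTransvection_embedding n⟩
  rintro τ ⟨p, q, hpq, rfl⟩
  exact ⟨sympProj n (Pi.single p 1 + Pi.single q 1),
    sympProj_single_add_single_ne_zero (by omega) hpq, sympRep_swap hpq⟩
end

section
/- Let n ≥ 5 be odd and let V = (Fin n → F₄), where F₄ = GaloisField 2 2 is the field with four elements, equipped with the Hermitian form B(x,y) = Σ_i x_i y_i². Then: (a) there exists an injective group homomorphism ψ from the symmetric group S_{n+1} to the group of linear automorphisms of V such that for every transposition τ ∈ S_{n+1}, ψ(τ) is a unitary transvection t_v for some nonzero singular vector v ∈ V; and (b) there is no injective group homomorphism from S_{n+2} to the linear automorphisms of V sending every transposition to a unitary transvection. (Equivalently, φ(U_n(2)) = n+1 for odd n ≥ 5.) -/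
/-- The field with four elements. -/
abbrev F4 : Type := GaloisField 2 2

/-- The standard Hermitian form on `F₄ⁿ`: `B x y = ∑ i, x i * (y i)²`
(conjugation in `F₄` is `a ↦ a²`). -/
noncomputable def hermForm (n : ℕ) (x y : Fin n → F4) : F4 :=
  ∑ i : Fin n, x i * (y i) ^ 2

/-!
(a) Let `S_{n+1}` permute the coordinates of `F₄^{n+1}`. As `n + 1` is even, the all-ones vector
`𝟙` lies in the sum-zero hyperplane `Z`, and `w ↦ (w, ∑ w)` identifies `V` with `Z`. Correcting the
permutation action by a multiple of `𝟙` so that it preserves the last coordinate gives an action on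
`Z`, hence on `V`, in which `(p q)` acts as the transvection centred at the image of `e_p + e_q`
under `y ↦ (y_i + y_n)_{i < n}`; for `n ≥ 4` this action is faithful.

(b) Let `u_k` be the centres of the images of the transpositions `(0 k)`, `1 ≤ k ≤ n + 1`.
Transvections with orthogonal centres commute, commuting transvections have orthogonal or
proportional centres, and `t_u t_v t_u = t_{t_u v}`. Since `(0 k)` and `(0 l)` do not commute while
`(1 k)` and `(0 l)` do, this forces `B(u_k, u_l) ≠ 0` and `B(u_k, u_l) = B(u_k, u_1) B(u_1, u_l)`.
After rescaling, the `n + 1` centres have Gram matrix `J - I`, which is invertible as `n + 1` is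
even, so they are linearly independent in the `n`-dimensional `V`.
-/

open Finset Equiv

lemma F4.pow_four (a : F4) : a ^ 4 = a := by
  let := Fintype.ofFinite F4
  have hcard : Fintype.card F4 = 4 := by
    rw [← Nat.card_eq_fintype_card, GaloisField.card 2 2 two_ne_zero]; rfl
  simpa [hcard] using FiniteField.pow_card a

lemma F4.pow_three_eq_one {a : F4} (ha : a ≠ 0) : a ^ 3 = 1 :=
  mul_left_cancel₀ ha (by rw [← pow_succ', F4.pow_four, mul_one])

def pairIndicator {R : Type*} [Semiring R] {m : ℕ} (p q : Fin m) : Fin m → R :=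
  Pi.single p 1 + Pi.single q 1

section HermForm

variable {n : ℕ}

lemma hermForm_add_left (x x' y : Fin n → F4) :
    hermForm n (x + x') y = hermForm n x y + hermForm n x' y := by
  simp [hermForm, add_mul, sum_add_distrib]

lemma hermForm_smul_left (c : F4) (x y : Fin n → F4) :
    hermForm n (c • x) y = c * hermForm n x y := by
  simp [hermForm, mul_sum, mul_assoc]

lemma hermForm_add_right (x y y' : Fin n → F4) :
    hermForm n x (y + y') = hermForm n x y + hermForm n x y' := by
  simp [hermForm, CharTwo.add_sq, mul_add, sum_add_distrib]

lemma hermForm_smul_right (c : F4) (x y : Fin n → F4) :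
    hermForm n x (c • y) = c ^ 2 * hermForm n x y := by
  simp only [hermForm, Pi.smul_apply, smul_eq_mul, mul_sum]
  exact sum_congr rfl fun i _ => by ring

lemma hermForm_comm (x y : Fin n → F4) : hermForm n y x = hermForm n x y ^ 2 := by
  rw [hermForm, hermForm, CharTwo.sum_sq]
  refine sum_congr rfl fun i _ => ?_
  rw [mul_pow, ← pow_mul, F4.pow_four, mul_comm]

lemma hermForm_zero_left (y : Fin n → F4) : hermForm n 0 y = 0 := by
  simp [hermForm]

lemma hermForm_sum_smul_left {ι : Type*} [Fintype ι] (g : ι → F4) (x : ι → Fin n → F4)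
    (y : Fin n → F4) : hermForm n (∑ k, g k • x k) y = ∑ k, g k * hermForm n (x k) y := by
  simp only [hermForm, Finset.sum_apply, Pi.smul_apply, smul_eq_mul, sum_mul, mul_sum]
  rw [sum_comm]
  exact sum_congr rfl fun k _ => sum_congr rfl fun i _ => by ring

lemma exists_hermForm_ne_zero {v : Fin n → F4} (hv : v ≠ 0) : ∃ w, hermForm n w v ≠ 0 := by
  obtain ⟨i, hi⟩ := Function.ne_iff.mp hv
  exact ⟨Pi.single i 1, by simpa [hermForm, Pi.single_apply] using hi⟩

lemma hermForm_pairIndicator {m : ℕ} (p q : Fin m) (x : Fin m → F4) :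
    hermForm m x (pairIndicator p q) = x p + x q := by
  simp [hermForm, pairIndicator, CharTwo.add_sq, Pi.single_apply, mul_add, sum_add_distrib]

lemma linearIndependent_of_hermForm_eq_ite {ι : Type*} [Fintype ι] [DecidableEq ι]
    (hcard : (Fintype.card ι : F4) = 0) {x : ι → Fin n → F4}
    (hx : ∀ k l, hermForm n (x k) (x l) = if k = l then 0 else 1) :
    LinearIndependent F4 x := by
  rw [Fintype.linearIndependent_iff]
  intro g hg
  -- pairing `∑ g k • x k = 0` with `x l` gives `∑ g - g l = 0`
  have hg_eq : ∀ l, g l = ∑ k, g k := by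
    intro l
    have h := hermForm_sum_smul_left g x (x l)
    simp only [hg, hermForm_zero_left, hx, mul_ite, mul_zero, mul_one] at h
    rw [sum_ite, sum_const_zero, zero_add, filter_ne', sum_erase_eq_sub (mem_univ l)] at h
    exact (sub_eq_zero.mp h.symm).symm
  have hsum : ∑ k, g k = 0 := by
    have h := sum_congr rfl fun l (_ : l ∈ univ) => hg_eq l
    rwa [sum_const, card_univ, nsmul_eq_mul, hcard, zero_mul] at h
  exact fun l => (hg_eq l).trans hsum

end HermForm

section Transvection

variable {n : ℕ}

noncomputable def unitaryTransvection (v w : Fin n → F4) : Fin n → F4 :=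
  w + hermForm n w v • v

lemma unitaryTransvection_zero : unitaryTransvection (0 : Fin n → F4) = id := by
  ext w i
  simp [unitaryTransvection]

lemma unitaryTransvection_smul {μ : F4} (hμ : μ ≠ 0) (v : Fin n → F4) :
    unitaryTransvection (μ • v) = unitaryTransvection v := by
  ext w i
  simp only [unitaryTransvection, hermForm_smul_right, smul_smul, Pi.add_apply, Pi.smul_apply,
    smul_eq_mul]
  rw [mul_comm _ μ, ← mul_assoc, ← pow_succ', F4.pow_three_eq_one hμ, one_mul]

lemma unitaryTransvection_apply_apply (u v w : Fin n → F4) :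
    unitaryTransvection u (unitaryTransvection v w) =
      w + hermForm n w v • v + (hermForm n w u + hermForm n w v * hermForm n v u) • u := by
  simp only [unitaryTransvection, hermForm_add_left, hermForm_smul_left, add_smul]

lemma commute_unitaryTransvection_of_hermForm_eq_zero {u v : Fin n → F4}
    (h : hermForm n u v = 0) :
    Function.Commute (unitaryTransvection u) (unitaryTransvection v) := by
  have h' : hermForm n v u = 0 := by rw [hermForm_comm, h, zero_pow two_ne_zero]
  intro w
  simp only [unitaryTransvection_apply_apply, h, h', mul_zero, add_zero]
  abel

lemma hermForm_eq_zero_or_eq_of_commute {u v : Fin n → F4} (hu : u ≠ 0)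
    (h : Function.Commute (unitaryTransvection u) (unitaryTransvection v)) :
    hermForm n u v = 0 ∨ unitaryTransvection v = unitaryTransvection u := by
  refine or_iff_not_imp_left.mpr fun huv => ?_
  obtain ⟨w, hw⟩ := exists_hermForm_ne_zero hu
  set b := hermForm n w u * hermForm n u v
  set c := hermForm n w v * hermForm n v u
  have hb : b ≠ 0 := mul_ne_zero hw huv
  have hprop : b • v = c • u := by
    have := h w
    simp only [unitaryTransvection_apply_apply, add_smul, mul_smul] at this
    simp only [b, c, mul_smul]
    linear_combination (norm := module) -this
  have hv : v = (b⁻¹ * c) • u := by rw [mul_smul, ← hprop, inv_smul_smul₀ hb]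
  have hμ : b⁻¹ * c ≠ 0 := by
    rintro hμ
    rw [hμ, zero_smul] at hv
    simp [hv, hermForm] at huv
  rw [hv, unitaryTransvection_smul hμ]

lemma unitaryTransvection_conj {u : Fin n → F4} (hu : hermForm n u u = 0) (v w : Fin n → F4) :
    unitaryTransvection u (unitaryTransvection v (unitaryTransvection u w)) =
      unitaryTransvection (unitaryTransvection u v) w := by
  have hc : hermForm n u v = hermForm n v u ^ 2 := hermForm_comm v u
  simp only [unitaryTransvection, hermForm_add_left, hermForm_smul_left, hermForm_add_right,
    hermForm_smul_right, hu, ← hc]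
  ext i
  simp only [Pi.add_apply, Pi.smul_apply, smul_eq_mul]
  linear_combination (hermForm n w u * u i) * CharTwo.two_eq_zero (R := F4)

end Transvection

def SwapsToTransvections {n : ℕ} {α : Type*} [DecidableEq α]
    (ψ : Perm α →* ((Fin n → F4) ≃ₗ[F4] (Fin n → F4))) : Prop :=
  ∀ τ : Perm α, τ.IsSwap → ∃ v : Fin n → F4, v ≠ 0 ∧ hermForm n v v = 0 ∧
    ∀ w, ψ τ w = unitaryTransvection v w

section PermLastFixed

variable {R : Type*} [CommRing R] {m : ℕ}

def permLastFixed (σ : Perm (Fin (m + 1))) : (Fin (m + 1) → R) →ₗ[R] (Fin (m + 1) → R) where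
  toFun x l := x (σ⁻¹ l) + (x (Fin.last m) - x (σ⁻¹ (Fin.last m)))
  map_add' x y := by ext l; simp only [Pi.add_apply]; ring
  map_smul' c x := by ext l; simp only [Pi.smul_apply, smul_eq_mul, RingHom.id_apply]; ring

lemma permLastFixed_apply (σ : Perm (Fin (m + 1))) (x : Fin (m + 1) → R) (l : Fin (m + 1)) :
    permLastFixed σ x l = x (σ⁻¹ l) + (x (Fin.last m) - x (σ⁻¹ (Fin.last m))) := rfl

lemma permLastFixed_one (x : Fin (m + 1) → R) : permLastFixed 1 x = x := by
  ext l; simp [permLastFixed_apply]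

lemma permLastFixed_mul (σ ρ : Perm (Fin (m + 1))) (x : Fin (m + 1) → R) :
    permLastFixed (σ * ρ) x = permLastFixed σ (permLastFixed ρ x) := by
  ext l; simp only [permLastFixed_apply, mul_inv_rev, Perm.mul_apply]; ring

lemma sum_permLastFixed (hm : (m + 1 : R) = 0) (σ : Perm (Fin (m + 1)))
    (x : Fin (m + 1) → R) : ∑ l, permLastFixed σ x l = ∑ l, x l := by
  simp only [permLastFixed_apply, sum_add_distrib, sum_const, card_univ, Fintype.card_fin,
    nsmul_eq_mul, Nat.cast_add, Nat.cast_one, hm, zero_mul, add_zero]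
  exact Equiv.sum_comp σ⁻¹ x

lemma eq_one_of_forall_permLastFixed_eq [Nontrivial R] (hm : 4 ≤ m) {σ : Perm (Fin (m + 1))}
    (h : ∀ x : Fin (m + 1) → R, ∑ l, x l = 0 → permLastFixed σ x = x) : σ = 1 := by
  by_contra hσ
  obtain ⟨a, ha⟩ : ∃ a, σ⁻¹ a ≠ a := by
    by_contra! h'
    exact hσ (inv_eq_one.mp (Equiv.ext h'))
  obtain ⟨b, -, hb⟩ := exists_mem_notMem_of_card_lt_card (t := univ) (s := {a, σ⁻¹ a})
    (card_le_two.trans_lt (by rw [card_univ, Fintype.card_fin]; omega))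
  obtain ⟨k, -, hk⟩ := exists_mem_notMem_of_card_lt_card (t := univ) (s := {a, b, σ a, σ b})
    (card_le_four.trans_lt (by rw [card_univ, Fintype.card_fin]; omega))
  simp only [mem_insert, mem_singleton, not_or] at hb hk
  obtain ⟨hba, hbσa⟩ := hb
  obtain ⟨hka, hkb, hkσa, hkσb⟩ := hk
  set x : Fin (m + 1) → R := Pi.single a 1 - Pi.single b 1
  set c := x (Fin.last m) - x (σ⁻¹ (Fin.last m))
  -- `σ` moves `x` only by the constant `c`, but `x - σ • x` is `1` at `a` and `0` at `k`
  have hx : ∀ l, x (σ⁻¹ l) + c = x l := congrFun (h x (by simp [x, sum_sub_distrib]))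
  have hσk : σ⁻¹ k ≠ a ∧ σ⁻¹ k ≠ b := by
    constructor <;> rintro h <;> simp [← h] at hkσa hkσb
  have hxa := hx a
  have hxk := hx k
  simp only [x, Pi.sub_apply, Pi.single_apply, ha, Ne.symm hbσa, Ne.symm hba, hka, hkb, hσk.1,
    hσk.2, if_true, if_false, sub_zero, sub_self, zero_add] at hxa hxk
  exact one_ne_zero (hxa.symm.trans hxk)

end PermLastFixed

lemma permLastFixed_swap {R : Type*} [CommRing R] [CharP R 2] {m : ℕ} (p q : Fin (m + 1))
    (x : Fin (m + 1) → R) :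
    permLastFixed (swap p q) x = x + (x p + x q) •
      (pairIndicator p q + (pairIndicator p q (Fin.last m) : R) • 1) := by
  ext l
  simp only [permLastFixed_apply, swap_inv, swap_apply_def, pairIndicator, Pi.add_apply,
    Pi.smul_apply, Pi.single_apply, Pi.one_apply, smul_eq_mul]
  split_ifs <;> grind

section Construction

variable {n : ℕ}

noncomputable def snocSum : (Fin n → F4) →ₗ[F4] (Fin (n + 1) → F4) where
  toFun w := Fin.snoc w (∑ i, w i)
  map_add' w w' := by
    ext l; refine Fin.lastCases ?_ (fun i => ?_) l <;> simp [sum_add_distrib]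
  map_smul' c w := by
    ext l; refine Fin.lastCases ?_ (fun i => ?_) l <;> simp [mul_sum]

lemma init_snocSum (w : Fin n → F4) : Fin.init (snocSum w) = w := Fin.init_snoc _ _

lemma sum_snocSum (w : Fin n → F4) : ∑ l, snocSum w l = 0 := by
  simp [snocSum, Fin.sum_univ_castSucc, CharTwo.add_self_eq_zero]

lemma snocSum_init {x : Fin (n + 1) → F4} (hx : ∑ l, x l = 0) : snocSum (Fin.init x) = x := by
  rw [Fin.sum_univ_castSucc, CharTwo.add_eq_zero] at hx
  conv_rhs => rw [← Fin.snoc_init_self x, ← hx]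
  rfl

lemma hermForm_snocSum (w : Fin n → F4) (y : Fin (n + 1) → F4) :
    hermForm (n + 1) (snocSum w) y = hermForm n w (Fin.init (y + y (Fin.last n) • 1)) := by
  simp [hermForm, snocSum, Fin.sum_univ_castSucc, Fin.init, CharTwo.add_sq, mul_add,
    sum_add_distrib, sum_mul]

noncomputable def permRep (σ : Perm (Fin (n + 1))) : (Fin n → F4) →ₗ[F4] (Fin n → F4) :=
  LinearMap.funLeft F4 F4 Fin.castSucc ∘ₗ permLastFixed σ ∘ₗ snocSum

lemma permRep_apply (σ : Perm (Fin (n + 1))) (w : Fin n → F4) :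
    permRep σ w = Fin.init (permLastFixed σ (snocSum w)) := rfl

noncomputable def permRepresentation (hn : (n + 1 : F4) = 0) :
    Representation F4 (Perm (Fin (n + 1))) (Fin n → F4) where
  toFun := permRep
  map_one' := LinearMap.ext fun w => by
    rw [permRep_apply, permLastFixed_one, init_snocSum]; rfl
  map_mul' σ ρ := LinearMap.ext fun w => by
    rw [Module.End.mul_apply, permRep_apply, permRep_apply, permRep_apply, snocSum_init
      (by rw [sum_permLastFixed hn, sum_snocSum]), permLastFixed_mul]

noncomputable def transpositionCentre (p q : Fin (n + 1)) : Fin n → F4 :=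
  Fin.init ((pairIndicator p q : Fin (n + 1) → F4) + (pairIndicator p q (Fin.last n) : F4) • 1)

lemma snocSum_transpositionCentre (hn : (n + 1 : F4) = 0) (p q : Fin (n + 1)) :
    snocSum (transpositionCentre p q) =
      (pairIndicator p q : Fin (n + 1) → F4) + (pairIndicator p q (Fin.last n) : F4) • 1 := by
  refine snocSum_init ?_
  simp [pairIndicator, sum_add_distrib, hn, CharTwo.add_self_eq_zero]

lemma permRep_swap (p q : Fin (n + 1)) (w : Fin n → F4) :
    permRep (swap p q) w = unitaryTransvection (transpositionCentre p q) w := by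
  rw [permRep_apply, permLastFixed_swap, unitaryTransvection, transpositionCentre,
    ← hermForm_snocSum, hermForm_pairIndicator]
  change Fin.init (snocSum w) + _ = _
  rw [init_snocSum]
  rfl

lemma hermForm_transpositionCentre_self (hn : (n + 1 : F4) = 0) {p q : Fin (n + 1)}
    (hpq : p ≠ q) : hermForm n (transpositionCentre p q) (transpositionCentre p q) = 0 := by
  rw [transpositionCentre, ← hermForm_snocSum, ← transpositionCentre,
    snocSum_transpositionCentre hn, hermForm_pairIndicator]
  simp only [pairIndicator, Pi.add_apply, Pi.smul_apply, Pi.one_apply, Pi.single_eq_same,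
    Pi.single_eq_of_ne hpq, Pi.single_eq_of_ne hpq.symm, add_zero, zero_add, smul_eq_mul, mul_one]
  exact CharTwo.add_self_eq_zero (R := F4) _

lemma transpositionCentre_ne_zero (hn : (n + 1 : F4) = 0) (h2 : 2 ≤ n) {p q : Fin (n + 1)}
    (hpq : p ≠ q) : transpositionCentre p q ≠ 0 := by
  intro h
  have h' := snocSum_transpositionCentre hn p q
  rw [h, map_zero] at h'
  obtain ⟨k, -, hk⟩ := exists_mem_notMem_of_card_lt_card (t := univ) (s := {p, q})
    (card_le_two.trans_lt (by rw [card_univ, Fintype.card_fin]; omega))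
  simp only [mem_insert, mem_singleton, not_or] at hk
  have hp := congrFun h' p
  have hk' := congrFun h' k
  simp only [pairIndicator, Pi.zero_apply, Pi.add_apply, Pi.smul_apply, Pi.one_apply,
    Pi.single_apply, hpq, hk.1, hk.2, if_true, if_false, add_zero, zero_add, smul_eq_mul,
    mul_one] at hp hk'
  rw [← hk', add_zero] at hp
  exact zero_ne_one hp

lemma eq_one_of_forall_permRep_eq (hn : (n + 1 : F4) = 0) (h4 : 4 ≤ n)
    {σ : Perm (Fin (n + 1))} (h : ∀ w, permRep σ w = w) : σ = 1 := by
  refine eq_one_of_forall_permLastFixed_eq (R := F4) h4 fun x hx => ?_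
  have hσx : ∑ l, permLastFixed σ x l = 0 := by rw [sum_permLastFixed hn, hx]
  calc permLastFixed σ x = snocSum (Fin.init (permLastFixed σ x)) := (snocSum_init hσx).symm
    _ = snocSum (permRep σ (Fin.init x)) := by rw [permRep_apply, snocSum_init hx]
    _ = x := by rw [h, snocSum_init hx]

lemma exists_injective_swapsToTransvections (hn : 4 ≤ n) (hodd : Odd n) :
    ∃ ψ : Perm (Fin (n + 1)) →* ((Fin n → F4) ≃ₗ[F4] (Fin n → F4)),
      Function.Injective ψ ∧ SwapsToTransvections ψ := by
  have hn1 : (n + 1 : F4) = 0 := by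
    exact_mod_cast natCast_eq_zero_of_even_of_two_eq_zero hodd.add_one CharTwo.two_eq_zero
  refine ⟨(LinearMap.GeneralLinearGroup.generalLinearEquiv F4 _).toMonoidHom.comp
    (permRepresentation hn1).asGroupHom, ?_, ?_⟩
  · refine (injective_iff_map_eq_one _).mpr fun σ hσ => ?_
    exact eq_one_of_forall_permRep_eq hn1 hn fun w => congrArg (· w) hσ
  · rintro τ ⟨p, q, hpq, rfl⟩
    exact ⟨transpositionCentre p q, transpositionCentre_ne_zero hn1 (by omega) hpq,
      hermForm_transpositionCentre_self hn1 hpq, permRep_swap p q⟩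

end Construction

lemma coe_map_mul_eq_comp {G R M : Type*} [Monoid G] [Semiring R] [AddCommMonoid M]
    [Module R M] (ψ : G →* (M ≃ₗ[R] M)) (σ ρ : G) : ⇑(ψ (σ * ρ)) = ψ σ ∘ ψ ρ := by
  rw [map_mul]; rfl

lemma hermForm_eq_zero_of_commute {n : ℕ} {G : Type*} [Monoid G]
    {ψ : G →* ((Fin n → F4) ≃ₗ[F4] (Fin n → F4))} (hψ : Function.Injective ψ) {σ ρ : G}
    {u v : Fin n → F4} (hσ : ⇑(ψ σ) = unitaryTransvection u)
    (hρ : ⇑(ψ ρ) = unitaryTransvection v) (hσ1 : σ ≠ 1) (hσρ : σ ≠ ρ) (hcomm : Commute σ ρ) :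
    hermForm n u v = 0 := by
  have hu : u ≠ 0 := by
    rintro rfl
    refine hσ1 (hψ (DFunLike.coe_injective ?_))
    rw [hσ, unitaryTransvection_zero, map_one]; rfl
  have hc : Function.Commute (unitaryTransvection u) (unitaryTransvection v) := by
    rw [← hσ, ← hρ]
    exact fun w => congrArg (· w) (hcomm.map ψ).eq
  refine (hermForm_eq_zero_or_eq_of_commute hu hc).resolve_right fun h => hσρ ?_
  exact hψ (DFunLike.coe_injective (hσ.trans (h.symm.trans hρ.symm)))

section SwapsToTransvections

variable {n : ℕ} {α : Type*} [DecidableEq α]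
  {ψ : Perm α →* ((Fin n → F4) ≃ₗ[F4] (Fin n → F4))}

lemma swap_mul_swap_ne_swap_mul_swap {a b c : α} (hab : a ≠ b) (hac : a ≠ c) (hbc : b ≠ c) :
    swap a b * swap a c ≠ swap a c * swap a b := by
  intro h
  have := congrArg (· a) h
  simp only [Perm.mul_apply, swap_apply_left, swap_apply_of_ne_of_ne hac.symm hbc.symm,
    swap_apply_of_ne_of_ne hab.symm hbc] at this
  exact hbc this.symm

lemma hermForm_ne_zero_of_swap (hψ : Function.Injective ψ) {a b c : α} (hab : a ≠ b)
    (hac : a ≠ c) (hbc : b ≠ c) {u v : Fin n → F4} (hu : ⇑(ψ (swap a b)) = unitaryTransvection u)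
    (hv : ⇑(ψ (swap a c)) = unitaryTransvection v) : hermForm n u v ≠ 0 := by
  intro huv
  refine swap_mul_swap_ne_swap_mul_swap hab hac hbc (hψ (DFunLike.coe_injective ?_))
  rw [coe_map_mul_eq_comp, coe_map_mul_eq_comp, hu, hv]
  exact (commute_unitaryTransvection_of_hermForm_eq_zero huv).comp_eq

lemma hermForm_eq_mul_of_swap (hψ : Function.Injective ψ) {a b c d : α} (hab : a ≠ b)
    (hac : a ≠ c) (had : a ≠ d) (hbc : b ≠ c) (hbd : b ≠ d) (hcd : c ≠ d) {u v w : Fin n → F4}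
    (hu : ⇑(ψ (swap a b)) = unitaryTransvection u) (huu : hermForm n u u = 0)
    (hv : ⇑(ψ (swap a c)) = unitaryTransvection v)
    (hw : ⇑(ψ (swap a d)) = unitaryTransvection w) :
    hermForm n v w = hermForm n v u * hermForm n u w := by
  have hbc_eq : swap a b * swap a c * swap a b = swap b c := by
    rw [swap_comm a c, swap_mul_swap_mul_swap hac.symm hbc.symm, swap_comm]
  have hψbc : ⇑(ψ (swap b c)) = unitaryTransvection (unitaryTransvection u v) := by
    ext1 x
    rw [← hbc_eq, coe_map_mul_eq_comp, coe_map_mul_eq_comp, hu, hv]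
    exact unitaryTransvection_conj huu v x
  have h := hermForm_eq_zero_of_commute hψ hψbc hw (by simpa [swap_eq_one_iff] using hbc)
    (fun h => had (by simpa [swap_apply_of_ne_of_ne hab hac] using congrArg (· a) h))
    (Perm.disjoint_swap_swap (by simp [hab.symm, hac.symm, hbc, hbd, hcd, had])).commute
  simp only [unitaryTransvection, hermForm_add_left, hermForm_smul_left] at h
  exact CharTwo.add_eq_zero.mp h

end SwapsToTransvections

lemma not_exists_injective_swapsToTransvections {n : ℕ} (hodd : Odd n) :
    ¬ ∃ ψ : Perm (Fin (n + 2)) →* ((Fin n → F4) ≃ₗ[F4] (Fin n → F4)),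
      Function.Injective ψ ∧ SwapsToTransvections ψ := by
  rintro ⟨ψ, hψ, hsw⟩
  choose u _ hus hu using fun k : Fin (n + 1) =>
    hsw (swap 0 k.succ) ⟨0, k.succ, (Fin.succ_ne_zero k).symm, rfl⟩
  replace hu : ∀ k, ⇑(ψ (swap 0 k.succ)) = unitaryTransvection (u k) := fun k => funext (hu k)
  have hsucc : ∀ {k l : Fin (n + 1)}, k ≠ l → k.succ ≠ l.succ := (Fin.succ_injective _).ne
  have h0 : ∀ k : Fin (n + 1), (0 : Fin (n + 2)) ≠ k.succ := fun k => (Fin.succ_ne_zero k).symm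
  set ε : Fin (n + 1) → F4 := fun k => if k = 0 then 1 else hermForm n (u 0) (u k)
  have hε : ∀ k, ε k ≠ 0 := fun k => by
    by_cases hk : k = 0
    · simp [ε, hk]
    · simpa [ε, hk] using
        hermForm_ne_zero_of_swap hψ (h0 0) (h0 k) (hsucc (Ne.symm hk)) (hu 0) (hu k)
  have hrel : ∀ k l, k ≠ l → hermForm n (u k) (u l) = ε k ^ 2 * ε l := by
    intro k l hkl
    rcases eq_or_ne k 0 with rfl | hk
    · simp [ε, Ne.symm hkl]
    rcases eq_or_ne l 0 with rfl | hl
    · simp [ε, hk, hermForm_comm (u 0)]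
    simp only [ε, hk, hl, if_false, ← hermForm_comm]
    exact hermForm_eq_mul_of_swap hψ (h0 0) (h0 k) (h0 l) (hsucc (Ne.symm hk))
      (hsucc (Ne.symm hl)) (hsucc hkl) (hu 0) (hus 0) (hu k) (hu l)
  have hgram : ∀ k l, hermForm n (ε k • u k) (ε l • u l) = if k = l then 0 else 1 := by
    intro k l
    rw [hermForm_smul_left, hermForm_smul_right]
    split_ifs with hkl
    · rw [hkl, hus, mul_zero, mul_zero]
    · rw [hrel k l hkl, show ε k * (ε l ^ 2 * (ε k ^ 2 * ε l)) = ε k ^ 3 * ε l ^ 3 by ring,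
        F4.pow_three_eq_one (hε k), F4.pow_three_eq_one (hε l), one_mul]
  have hcard : (Fintype.card (Fin (n + 1)) : F4) = 0 := by
    rw [Fintype.card_fin]
    exact natCast_eq_zero_of_even_of_two_eq_zero hodd.add_one CharTwo.two_eq_zero
  have := (linearIndependent_of_hermForm_eq_ite hcard hgram).fintype_card_le_finrank
  simp at this

/-- `φ(U_n(2)) = n + 1` for odd `n ≥ 5`: the symmetric group `S (n+1)`
embeds into `U_n(2)` with all transpositions going to unitary transvections (in nonzero
singular vectors), while `S (n+2)` does not. -/
theorem phi_unitary_odd (n : ℕ) (hn : 5 ≤ n) (hodd : Odd n) :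
    (∃ ψ : Equiv.Perm (Fin (n + 1)) →* ((Fin n → F4) ≃ₗ[F4] (Fin n → F4)),
      Function.Injective ψ ∧
      ∀ τ : Equiv.Perm (Fin (n + 1)), τ.IsSwap →
        ∃ v : Fin n → F4, v ≠ 0 ∧ hermForm n v v = 0 ∧
          ∀ w, (ψ τ) w = w + hermForm n w v • v) ∧
    ¬ (∃ ψ : Equiv.Perm (Fin (n + 2)) →* ((Fin n → F4) ≃ₗ[F4] (Fin n → F4)),
      Function.Injective ψ ∧
      ∀ τ : Equiv.Perm (Fin (n + 2)), τ.IsSwap →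
        ∃ v : Fin n → F4, v ≠ 0 ∧ hermForm n v v = 0 ∧
          ∀ w, (ψ τ) w = w + hermForm n w v • v) :=
  ⟨exists_injective_swapsToTransvections (by omega) hodd,
    not_exists_injective_swapsToTransvections hodd⟩
end

section
/- Let n ≥ 6 be even with n ≡ 6 (mod 8), and let V = (Fin n → ZMod 2) with the plus-type quadratic form Q(x) = Σ_{i=1}^{n/2} x_{2i−1} x_{2i} and its polar bilinear form B(x,y) = Q(x+y) + Q(x) + Q(y). Then: (a) there exists an injective group homomorphism ψ from the symmetric group S_{n+2} to the group of linear automorphisms of V such that for every transposition τ ∈ S_{n+2}, ψ(τ) is an orthogonal transvection t_v for some v ∈ V with Q(v) = 1; and (b) there is no injective group homomorphism from S_{n+3} to the linear automorphisms of V sending every transposition to such a transvection. (Equivalently, φ(O_n^{+}(2)) = n+2 when n ≡ 6 (mod 8).) -/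
/-- The plus-type quadratic form on `(ZMod 2)^n` (`n` even):
`Q x = ∑ i, x (2i) * x (2i+1)` (0-indexed). -/
def Qform (n : ℕ) (x : Fin n → ZMod 2) : ZMod 2 :=
  ∑ i : Fin (n / 2),
    x ⟨2 * i.1, by have := i.2; omega⟩ * x ⟨2 * i.1 + 1, by have := i.2; omega⟩

/-- The polar bilinear form `B x y = Q (x + y) + Q x + Q y` of a quadratic form `Q`. -/
def polarForm {n : ℕ} (Q : (Fin n → ZMod 2) → ZMod 2) (x y : Fin n → ZMod 2) : ZMod 2 :=
  Q (x + y) + Q x + Q y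

/-!
Write `n = 2m`, so that `n ≡ 6 (mod 8)` means `m ≡ 3 (mod 4)`, and split the coordinates into the
`m` hyperbolic pairs `(2l, 2l+1)`. Orient the pairs cyclically as a regular tournament (`l` beats
`l + d` for `1 ≤ d ≤ (m-1)/2`) and let `c_i` have a `1` at the partner of `i` and on both
coordinates of every pair beaten by the pair of `i`. Then `Q c_i = (m-1)/2 = 1` and
`B(c_i, c_j) = 1` for `i ≠ j`, so the `c_i` form a basis. Together with the all-ones vector and
`0` they give `n + 2` points `a_i` with `∑ a_i = 0` for which `B(a_i + a_j, a_p + a_q)` is the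
standard pairing of `e_i + e_j` and `e_p + e_q` in `𝔽₂^(n+2)`. Hence `a_i + a_j ↦ a_{σ i} + a_{σ j}`
is a faithful linear action of `S_{n+2}` in which `(k l)` acts as the transvection of `a_k + a_l`.

Conversely, the transpositions `(0 i)`, `1 ≤ i ≤ n + 2`, pairwise fail to commute, while the
transvections of `u` and `v` commute as soon as `B(u, v) = 0`. Under an embedding of `S_{n+3}`
their vectors would therefore have Gram matrix `J - I`, which is invertible over `𝔽₂` in the even
size `n + 2`: they would be `n + 2` independent vectors in dimension `n`.
-/

open Equiv Function Module

theorem LinearMap.transvection.commute_of_apply_eq_zero {R V : Type*} [Semiring R]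
    [AddCommMonoid V] [Module R V] {f g : Dual R V} {u v : V} (hfv : f v = 0) (hgu : g u = 0) :
    Commute (transvection f u) (transvection g v) := by
  ext x
  simp only [Module.End.mul_apply, apply, map_add, map_smul, hfv, hgu, zero_smul, add_zero]
  exact add_right_comm _ _ _

theorem Equiv.swap_apply_eq_add_smul {ι V : Type*} [DecidableEq ι] [AddCommGroup V]
    [Module (ZMod 2) V] (f : ι → V) (k l x : ι) :
    f (swap k l x) =
      f x + ((if x = k then 1 else 0) + (if x = l then 1 else 0) : ZMod 2) • (f k + f l) := by
  rcases eq_or_ne x k with rfl | hxk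
  · rcases eq_or_ne x l with rfl | hxl
    · simp [ZModModule.add_self]
    · simp [hxl, ← add_assoc, ZModModule.add_self]
  · rcases eq_or_ne x l with rfl | hxl
    · simp [hxk, add_left_comm, ZModModule.add_self]
    · simp [hxk, hxl, swap_apply_of_ne_of_ne]

theorem Equiv.not_commute_swap_swap {α : Type*} [DecidableEq α] {a b c : α} (hab : a ≠ b)
    (hac : a ≠ c) (hbc : b ≠ c) : ¬ Commute (swap a b) (swap a c) := by
  intro h
  have := congrArg (· a) h.eq
  simp [swap_apply_of_ne_of_ne hab.symm hbc, swap_apply_of_ne_of_ne hac.symm hbc.symm] at this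
  exact hbc this.symm

namespace LinearMap.BilinForm

variable {V : Type*} [AddCommGroup V] [Module (ZMod 2) V] {B : LinearMap.BilinForm (ZMod 2) V}

section GramAllOnes

variable {ι : Type*} [Fintype ι] [DecidableEq ι] {v : ι → V}

theorem apply_sum_smul_of_apply_eq_ite (hv : ∀ i j, B (v i) (v j) = if i = j then 0 else 1)
    (g : ι → ZMod 2) (j : ι) : B (∑ i, g i • v i) (v j) = (∑ i, g i) - g j := by
  simp only [map_sum, map_smul, LinearMap.sum_apply, LinearMap.smul_apply, hv, smul_eq_mul,
    mul_ite, mul_zero, mul_one]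
  simp [Finset.sum_ite, Finset.filter_ne', Finset.sum_erase_eq_sub]

theorem linearIndependent_of_apply_eq_ite (hcard : Even (Fintype.card ι))
    (hv : ∀ i j, B (v i) (v j) = if i = j then 0 else 1) : LinearIndependent (ZMod 2) v := by
  rw [Fintype.linearIndependent_iff]
  intro g hg
  have hconst (j : ι) : g j = ∑ i, g i := by
    have h := apply_sum_smul_of_apply_eq_ite hv g j
    rw [hg, map_zero, LinearMap.zero_apply, eq_comm, sub_eq_zero] at h
    exact h.symm
  have hsum : ∑ i, g i = 0 := by
    conv_lhs => rw [Finset.sum_congr rfl fun i _ => hconst i]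
    rw [Finset.sum_const, Finset.card_univ, nsmul_eq_mul,
      ZMod.natCast_eq_zero_iff_even.mpr hcard, zero_mul]
  exact fun j => (hconst j).trans hsum

theorem apply_sum_of_apply_eq_ite (hcard : Even (Fintype.card ι))
    (hv : ∀ i j, B (v i) (v j) = if i = j then 0 else 1) (j : ι) : B (∑ i, v i) (v j) = 1 := by
  have h := apply_sum_smul_of_apply_eq_ite hv 1 j
  simp only [Pi.one_apply, one_smul, Finset.sum_const, Finset.card_univ, nsmul_eq_mul,
    ZMod.natCast_eq_zero_iff_even.mpr hcard, mul_one] at h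
  rw [h]
  rfl

end GramAllOnes

theorem apply_eq_one_of_not_commute (hB : B.IsAlt) {s t : V ≃ₗ[ZMod 2] V} {u v : V}
    (hs : ∀ w, s w = w + B w u • u) (ht : ∀ w, t w = w + B w v • v) (hst : ¬ Commute s t) :
    B u v = 1 := by
  refine Fin.eq_one_of_ne_zero _ fun h0 => hst ?_
  ext w
  have := LinearMap.congr_fun
    (transvection.commute_of_apply_eq_zero (f := B.flip u) (g := B.flip v) (hB.eq_iff.mp h0) h0).eq w
  simpa only [LinearEquiv.mul_apply, Module.End.mul_apply, hs, ht, transvection.apply,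
    flip_apply] using this

theorem le_finrank_of_injective_swap_eq_transvection [Module.Finite (ZMod 2) V] (hB : B.IsAlt)
    {k : ℕ} (hk : Even k) {ψ : Perm (Fin (k + 1)) →* (V ≃ₗ[ZMod 2] V)} (hψ : Injective ψ)
    (hswap : ∀ τ : Perm (Fin (k + 1)), τ.IsSwap → ∃ v, ∀ w, ψ τ w = w + B w v • v) :
    k ≤ finrank (ZMod 2) V := by
  choose v hv using fun i : Fin k =>
    hswap (swap 0 i.succ) ⟨0, i.succ, (Fin.succ_ne_zero i).symm, rfl⟩
  have hgram (i j : Fin k) : B (v i) (v j) = if i = j then 0 else 1 := by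
    split_ifs with hij
    · rw [hij, hB.self_eq_zero]
    refine apply_eq_one_of_not_commute hB (hv i) (hv j) fun hcomm => ?_
    refine not_commute_swap_swap (Fin.succ_ne_zero i).symm (Fin.succ_ne_zero j).symm
      (Fin.succ_injective _ |>.ne hij) (hψ ?_)
    rw [map_mul, map_mul, hcomm.eq]
  simpa using (linearIndependent_of_apply_eq_ite (by simpa using hk) hgram).fintype_card_le_finrank

end LinearMap.BilinForm

namespace PlusType

variable {m : ℕ}

def fstCoord (l : Fin m) : Fin (2 * m) := ⟨2 * l, by omega⟩

def sndCoord (l : Fin m) : Fin (2 * m) := ⟨2 * l + 1, by omega⟩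

def pairIndex (i : Fin (2 * m)) : Fin m := ⟨i / 2, by omega⟩

@[simp] theorem pairIndex_fstCoord (l : Fin m) : pairIndex (fstCoord l) = l := by
  ext; simp [pairIndex, fstCoord]

@[simp] theorem pairIndex_sndCoord (l : Fin m) : pairIndex (sndCoord l) = l := by
  ext; simp [pairIndex, sndCoord]; omega

@[simp] theorem fstCoord_ne_sndCoord (l : Fin m) : fstCoord l ≠ sndCoord l := by
  simp [fstCoord, sndCoord, Fin.ext_iff]

@[simp] theorem sndCoord_ne_fstCoord (l : Fin m) : sndCoord l ≠ fstCoord l :=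
  (fstCoord_ne_sndCoord l).symm

theorem exists_eq_fstCoord_or_eq_sndCoord (i : Fin (2 * m)) :
    ∃ l, i = fstCoord l ∨ i = sndCoord l :=
  ⟨pairIndex i, by simp only [fstCoord, sndCoord, pairIndex, Fin.ext_iff]; omega⟩

theorem sum_eq_sum_pairs {M : Type*} [AddCommMonoid M] (f : Fin (2 * m) → M) :
    ∑ i, f i = ∑ l, (f (fstCoord l) + f (sndCoord l)) := by
  rw [← (finProdFinEquiv.trans (finCongr (mul_comm m 2))).sum_comp, Fintype.sum_prod_type]
  refine Finset.sum_congr rfl fun l _ => ?_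
  rw [Fin.sum_univ_two]
  congr 2 <;> ext <;> simp [fstCoord, sndCoord, add_comm]

theorem Qform_two_mul (x : Fin (2 * m) → ZMod 2) :
    Qform (2 * m) x = ∑ l, x (fstCoord l) * x (sndCoord l) :=
  Fintype.sum_equiv (finCongr (by omega)) _ _ fun _ => rfl

def polarBilin (m : ℕ) : LinearMap.BilinForm (ZMod 2) (Fin (2 * m) → ZMod 2) :=
  ∑ l, ((LinearMap.mul (ZMod 2) (ZMod 2)).compl₁₂ (.proj (fstCoord l)) (.proj (sndCoord l)) +
    (LinearMap.mul (ZMod 2) (ZMod 2)).compl₁₂ (.proj (sndCoord l)) (.proj (fstCoord l)))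

theorem polarBilin_apply (x y : Fin (2 * m) → ZMod 2) :
    polarBilin m x y =
      ∑ l, (x (fstCoord l) * y (sndCoord l) + x (sndCoord l) * y (fstCoord l)) := by
  simp [polarBilin, LinearMap.sum_apply]

theorem polarForm_Qform (x y : Fin (2 * m) → ZMod 2) :
    polarForm (Qform (2 * m)) x y = polarBilin m x y := by
  simp only [polarForm, Qform_two_mul, polarBilin_apply, Pi.add_apply, ← Finset.sum_add_distrib]
  refine Finset.sum_congr rfl fun l _ => ?_
  generalize x (fstCoord l) = a, x (sndCoord l) = b, y (fstCoord l) = c, y (sndCoord l) = d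
  revert a b c d
  decide

theorem Qform_add (x y : Fin (2 * m) → ZMod 2) :
    Qform (2 * m) (x + y) = Qform (2 * m) x + Qform (2 * m) y + polarBilin m x y := by
  rw [← polarForm_Qform, polarForm]
  generalize Qform (2 * m) (x + y) = a, Qform (2 * m) x = b, Qform (2 * m) y = c
  revert a b c
  decide

theorem polarBilin_comm (x y : Fin (2 * m) → ZMod 2) : polarBilin m x y = polarBilin m y x := by
  simp only [polarBilin_apply]
  exact Finset.sum_congr rfl fun l _ => by ring

theorem polarBilin_isAlt : (polarBilin m).IsAlt := fun x => by
  rw [polarBilin_apply]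
  exact Finset.sum_eq_zero fun l _ => by rw [mul_comm]; exact CharTwo.add_self_eq_zero _

def beats (k l : Fin m) : Prop := 0 < (l - k : Fin m).val ∧ 2 * (l - k : Fin m).val < m

instance : DecidableRel (beats (m := m)) := fun _ _ => inferInstanceAs (Decidable (_ ∧ _))

theorem not_beats_self (k : Fin m) : ¬ beats k k := by
  simp [beats, Fin.coe_sub_iff_le.mpr le_rfl]

theorem beats_iff_not_beats (hm : Odd m) {k l : Fin m} (hkl : k ≠ l) :
    beats l k ↔ ¬ beats k l := by
  obtain ⟨h, rfl⟩ := hm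
  rcases lt_or_gt_of_ne hkl with hlt | hlt
  · rw [beats, beats, Fin.coe_sub_iff_lt.mpr hlt, Fin.coe_sub_iff_le.mpr hlt.le]
    have : (k : ℕ) < l := hlt
    omega
  · rw [beats, beats, Fin.coe_sub_iff_le.mpr hlt.le, Fin.coe_sub_iff_lt.mpr hlt]
    have : (l : ℕ) < k := hlt
    omega

theorem card_beats (k : Fin m) : (Finset.univ.filter (beats k)).card = (m - 1) / 2 := by
  have : NeZero m := ⟨(Fin.pos k).ne'⟩
  rw [Finset.card_equiv (Equiv.subRight k)
      (t := Finset.univ.filter fun d : Fin m => 0 < d.val ∧ 2 * d.val < m) (by simp [beats]),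
    ← Finset.card_map Fin.valEmbedding]
  suffices h : (Finset.univ.filter fun d : Fin m => 0 < d.val ∧ 2 * d.val < m).map
      Fin.valEmbedding = Finset.Icc 1 ((m - 1) / 2) by
    rw [h, Nat.card_Icc]
    omega
  ext d
  simp only [Finset.mem_map, Finset.mem_filter, Finset.mem_univ, true_and, Fin.valEmbedding_apply,
    Finset.mem_Icc]
  constructor
  · rintro ⟨a, ha, rfl⟩
    omega
  · intro hd
    exact ⟨⟨d, by omega⟩, by simp only; omega, rfl⟩

def frameVec (i : Fin (2 * m)) : Fin (2 * m) → ZMod 2 := fun j =>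
  if pairIndex j = pairIndex i then (if j = i then 0 else 1)
  else if beats (pairIndex i) (pairIndex j) then 1 else 0

theorem frameVec_fstCoord_of_ne {i : Fin (2 * m)} {l : Fin m} (h : l ≠ pairIndex i) :
    frameVec i (fstCoord l) = if beats (pairIndex i) l then 1 else 0 := by
  simp [frameVec, h]

theorem frameVec_fstCoord_mul_sndCoord (i : Fin (2 * m)) (l : Fin m) :
    frameVec i (fstCoord l) * frameVec i (sndCoord l) =
      if beats (pairIndex i) l then 1 else 0 := by
  obtain ⟨k, rfl | rfl⟩ := exists_eq_fstCoord_or_eq_sndCoord i <;>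
    by_cases h : l = k <;> simp [frameVec, h, not_beats_self]

theorem frameVec_fstCoord_add_sndCoord (i : Fin (2 * m)) (l : Fin m) :
    frameVec i (fstCoord l) + frameVec i (sndCoord l) = if l = pairIndex i then 1 else 0 := by
  obtain ⟨k, rfl | rfl⟩ := exists_eq_fstCoord_or_eq_sndCoord i <;>
    by_cases h : l = k <;> simp [frameVec, h, CharTwo.add_self_eq_zero]

theorem frameVec_fstCoord_apply_add_frameVec_sndCoord_apply (l : Fin m) (p : Fin (2 * m)) :
    frameVec (fstCoord l) p + frameVec (sndCoord l) p = if pairIndex p = l then 1 else 0 := by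
  obtain ⟨k, rfl | rfl⟩ := exists_eq_fstCoord_or_eq_sndCoord p <;>
    by_cases h : k = l <;> simp [frameVec, h, CharTwo.add_self_eq_zero]

theorem polarBilin_frameVec (i j : Fin (2 * m)) :
    polarBilin m (frameVec i) (frameVec j) =
      frameVec i (fstCoord (pairIndex j)) + frameVec j (fstCoord (pairIndex i)) := by
  have hsplit (x y : Fin (2 * m) → ZMod 2) (l : Fin m) :
      x (fstCoord l) * y (sndCoord l) + x (sndCoord l) * y (fstCoord l) =
        x (fstCoord l) * (y (fstCoord l) + y (sndCoord l)) +
          (x (fstCoord l) + x (sndCoord l)) * y (fstCoord l) := by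
    ring_nf
    reduce_mod_char
  simp only [polarBilin_apply, hsplit, frameVec_fstCoord_add_sndCoord, mul_ite, ite_mul, mul_one,
    one_mul, mul_zero, zero_mul, Finset.sum_add_distrib, Finset.sum_ite_eq', Finset.mem_univ,
    if_true]

theorem polarBilin_frameVec_eq_ite (hm : Odd m) (i j : Fin (2 * m)) :
    polarBilin m (frameVec i) (frameVec j) = if i = j then 0 else 1 := by
  split_ifs with hij
  · rw [hij]
    exact polarBilin_isAlt _
  rw [polarBilin_frameVec]
  by_cases h : pairIndex i = pairIndex j
  · obtain ⟨k, rfl | rfl⟩ := exists_eq_fstCoord_or_eq_sndCoord i <;>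
      obtain ⟨k', rfl | rfl⟩ := exists_eq_fstCoord_or_eq_sndCoord j <;>
      simp_all [frameVec]
  · rw [frameVec_fstCoord_of_ne (Ne.symm h), frameVec_fstCoord_of_ne h]
    simp only [beats_iff_not_beats hm h]
    split_ifs <;> rfl

theorem linearIndependent_frameVec (hm : Odd m) :
    LinearIndependent (ZMod 2) (frameVec (m := m)) :=
  LinearMap.BilinForm.linearIndependent_of_apply_eq_ite (by simp) (polarBilin_frameVec_eq_ite hm)

theorem Qform_frameVec (hm : m % 4 = 3) (i : Fin (2 * m)) : Qform (2 * m) (frameVec i) = 1 := by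
  simp only [Qform_two_mul, frameVec_fstCoord_mul_sndCoord, Finset.sum_boole, card_beats]
  exact ZMod.natCast_eq_one_iff_odd.mpr (Nat.odd_iff.mpr (by omega))

theorem sum_frameVec : ∑ i, frameVec (m := m) i = 1 := by
  ext p
  simp [Finset.sum_apply, sum_eq_sum_pairs, frameVec_fstCoord_apply_add_frameVec_sndCoord_apply]

theorem Qform_one (hm : Odd m) : Qform (2 * m) 1 = 1 := by
  simp [Qform_two_mul, ZMod.natCast_eq_one_iff_odd.mpr hm]

def frame : Fin (2 * m + 2) → Fin (2 * m) → ZMod 2 :=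
  Fin.lastCases 0 (Fin.lastCases 1 frameVec)

@[simp] theorem frame_last : frame (Fin.last (2 * m + 1)) = 0 := Fin.lastCases_last

@[simp] theorem frame_castSucc_last : frame (Fin.last (2 * m)).castSucc = 1 := by
  simp [frame]

@[simp] theorem frame_castSucc_castSucc (i : Fin (2 * m)) :
    frame i.castSucc.castSucc = frameVec i := by
  simp [frame]

theorem sum_frame : ∑ i, frame (m := m) i = 0 := by
  simp only [Fin.sum_univ_castSucc, frame_castSucc_castSucc, sum_frameVec, frame_castSucc_last,
    frame_last, add_zero]
  ext
  rfl

/-- Stated so that the point `Fin.last _` (where `frame` is `0`) cancels from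
`polarBilin_frame_add_frame`. -/
theorem polarBilin_frame (hm : Odd m) (i j : Fin (2 * m + 2)) :
    polarBilin m (frame i) (frame j) = 1 + (if i = j then 1 else 0) +
      (if i = Fin.last _ then 1 else 0) + (if j = Fin.last _ then 1 else 0) := by
  have hone (j : Fin (2 * m)) : polarBilin m 1 (frameVec j) = 1 := by
    rw [← sum_frameVec]
    exact LinearMap.BilinForm.apply_sum_of_apply_eq_ite (by simp) (polarBilin_frameVec_eq_ite hm) j
  have hone' (j : Fin (2 * m)) : polarBilin m (frameVec j) 1 = 1 := by
    rw [polarBilin_comm, hone]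
  have hlast {k : ℕ} (i : Fin k) : Fin.last k ≠ i.castSucc := (Fin.castSucc_lt_last i).ne'
  induction i using Fin.lastCases with
  | last => induction j using Fin.lastCases <;> simp [hlast] <;> decide
  | cast i =>
    induction i using Fin.lastCases with
    | last =>
      induction j using Fin.lastCases with
      | last => simp; decide
      | cast j =>
        induction j using Fin.lastCases <;> simp [hone, polarBilin_isAlt _, hlast]
        decide
    | cast i =>
      induction j using Fin.lastCases with
      | last => simp; decide
      | cast j =>
        induction j using Fin.lastCases <;> simp [hone', polarBilin_frameVec_eq_ite hm]
        split_ifs <;> decide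

theorem polarBilin_frame_add_frame (hm : Odd m) (i j p q : Fin (2 * m + 2)) :
    polarBilin m (frame i + frame j) (frame p + frame q) =
      (if i = p then 1 else 0) + (if i = q then 1 else 0) +
        ((if j = p then 1 else 0) + (if j = q then 1 else 0)) := by
  simp only [map_add, LinearMap.add_apply, polarBilin_frame hm]
  ring_nf
  reduce_mod_char

theorem Qform_frame (hm : m % 4 = 3) (i : Fin (2 * m + 2)) :
    Qform (2 * m) (frame i) = 1 + if i = Fin.last _ then 1 else 0 := by
  have hodd : Odd m := Nat.odd_iff.mpr (by omega)
  induction i using Fin.lastCases with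
  | last => simp [Qform_two_mul]; decide
  | cast i =>
    induction i using Fin.lastCases with
    | last => simp [Qform_one hodd, Fin.castSucc_ne_last]
    | cast i => simp [Qform_frameVec hm, Fin.castSucc_ne_last]

theorem Qform_frame_add_frame (hm : m % 4 = 3) {i j : Fin (2 * m + 2)} (hij : i ≠ j) :
    Qform (2 * m) (frame i + frame j) = 1 := by
  rw [Qform_add, Qform_frame hm, Qform_frame hm, polarBilin_frame (Nat.odd_iff.mpr (by omega)),
    if_neg hij]
  ring_nf
  reduce_mod_char

theorem frame_add_frame_ne (hm : Odd m) (hm1 : 1 < m) {p q r s : Fin (2 * m + 2)} (hpq : p ≠ q)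
    (hpr : p ≠ r) (hps : p ≠ s) : frame p + frame q ≠ frame r + frame s := by
  obtain ⟨t, -, ht⟩ := Finset.exists_mem_notMem_of_card_lt_card (s := {p, q, r, s})
    (t := Finset.univ) (Finset.card_le_four.trans_lt (by simp; omega))
  simp only [Finset.mem_insert, Finset.mem_singleton, not_or] at ht
  intro h
  have hpair : polarBilin m (frame p + frame q) (frame p + frame t) =
      polarBilin m (frame r + frame s) (frame p + frame t) := by rw [h]
  rw [polarBilin_frame_add_frame hm, polarBilin_frame_add_frame hm] at hpair
  simp [hpq.symm, hpr.symm, hps.symm, Ne.symm ht.1, Ne.symm ht.2.1, Ne.symm ht.2.2.1,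
    Ne.symm ht.2.2.2] at hpair

noncomputable def frameBasis (hm : Odd m) : Basis (Fin (2 * m)) (ZMod 2) (Fin (2 * m) → ZMod 2) :=
  haveI : NeZero (2 * m) := ⟨by obtain ⟨k, rfl⟩ := hm; omega⟩
  basisOfLinearIndependentOfCardEqFinrank (linearIndependent_frameVec hm) (by simp)

@[simp] theorem coe_frameBasis (hm : Odd m) : ⇑(frameBasis hm) = frameVec := by
  simp [frameBasis]

noncomputable def permRep (hm : Odd m) (σ : Perm (Fin (2 * m + 2))) :
    Module.End (ZMod 2) (Fin (2 * m) → ZMod 2) :=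
  (frameBasis hm).constr (ZMod 2) fun i => frame (σ i.castSucc.castSucc) + frame (σ (Fin.last _))

theorem permRep_frameVec (hm : Odd m) (σ : Perm (Fin (2 * m + 2))) (i : Fin (2 * m)) :
    permRep hm σ (frameVec i) = frame (σ i.castSucc.castSucc) + frame (σ (Fin.last _)) := by
  rw [← congrFun (coe_frameBasis hm) i, permRep, Basis.constr_basis]

theorem permRep_frame (hm : Odd m) (σ : Perm (Fin (2 * m + 2))) (i : Fin (2 * m + 2)) :
    permRep hm σ (frame i) = frame (σ i) + frame (σ (Fin.last _)) := by
  induction i using Fin.lastCases with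
  | last => simp [ZModModule.add_self]
  | cast i =>
    induction i using Fin.lastCases with
    | last =>
      have hsum := sum_frame (m := m)
      rw [← Equiv.sum_comp σ, Fin.sum_univ_castSucc, Fin.sum_univ_castSucc] at hsum
      rw [frame_castSucc_last, ← sum_frameVec, map_sum, ← sub_eq_zero, ZModModule.sub_eq_add,
        ← add_assoc, ← hsum]
      simp [permRep_frameVec, Finset.sum_add_distrib, two_mul, ZModModule.add_self]
    | cast i => rw [frame_castSucc_castSucc, permRep_frameVec]

theorem permRep_frame_add_frame (hm : Odd m) (σ : Perm (Fin (2 * m + 2)))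
    (i j : Fin (2 * m + 2)) : permRep hm σ (frame i + frame j) = frame (σ i) + frame (σ j) := by
  rw [map_add, permRep_frame, permRep_frame, add_add_add_comm, ZModModule.add_self, add_zero]

noncomputable def permHom (hm : Odd m) :
    Perm (Fin (2 * m + 2)) →* Module.End (ZMod 2) (Fin (2 * m) → ZMod 2) where
  toFun := permRep hm
  map_one' := (frameBasis hm).ext fun i => by simp [permRep_frameVec]
  map_mul' σ τ := (frameBasis hm).ext fun i => by
    rw [coe_frameBasis, Module.End.mul_apply, permRep_frameVec, permRep_frameVec,
      permRep_frame_add_frame]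
    rfl

noncomputable def permEquivHom (hm : Odd m) :
    Perm (Fin (2 * m + 2)) →* ((Fin (2 * m) → ZMod 2) ≃ₗ[ZMod 2] (Fin (2 * m) → ZMod 2)) :=
  (LinearMap.GeneralLinearGroup.generalLinearEquiv _ _).toMonoidHom.comp (permHom hm).toHomUnits

theorem permEquivHom_apply (hm : Odd m) (σ : Perm (Fin (2 * m + 2)))
    (w : Fin (2 * m) → ZMod 2) : permEquivHom hm σ w = permRep hm σ w :=
  rfl

theorem permEquivHom_injective (hm : Odd m) (hm1 : 1 < m) : Injective (permEquivHom hm) := by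
  rw [injective_iff_map_eq_one]
  intro σ hσ
  by_contra hne
  obtain ⟨p, hp⟩ : ∃ p, σ p ≠ p := by simpa [Equiv.ext_iff] using hne
  obtain ⟨q, -, hq⟩ := Finset.exists_mem_notMem_of_card_lt_card (s := {p, σ.symm p})
    (t := Finset.univ) (Finset.card_le_two.trans_lt (by simp; omega))
  simp only [Finset.mem_insert, Finset.mem_singleton, not_or] at hq
  have hfix : permRep hm σ (frame p + frame q) = frame p + frame q := by
    rw [← permEquivHom_apply, hσ]
    rfl
  rw [permRep_frame_add_frame] at hfix
  exact frame_add_frame_ne hm hm1 (Ne.symm hq.1) (Ne.symm hp)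
    (fun h => hq.2 (σ.eq_symm_apply.mpr h.symm)) hfix.symm

theorem permRep_swap (hm : Odd m) (k l : Fin (2 * m + 2)) :
    permRep hm (swap k l) =
      LinearMap.transvection ((polarBilin m).flip (frame k + frame l)) (frame k + frame l) := by
  refine (frameBasis hm).ext fun i => ?_
  have hi : frameVec i = frame i.castSucc.castSucc + frame (Fin.last _) := by simp
  rw [coe_frameBasis, permRep_frameVec, LinearMap.transvection.apply,
    LinearMap.BilinForm.flip_apply, hi, polarBilin_frame_add_frame hm,
    swap_apply_eq_add_smul frame k l, swap_apply_eq_add_smul frame k l]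
  module

end PlusType

theorem phi_O_plus_2_mod8_six_general (n : ℕ) (hmod : n % 8 = 6) :
    (∃ ψ : Equiv.Perm (Fin (n + 2)) →* ((Fin n → ZMod 2) ≃ₗ[ZMod 2] (Fin n → ZMod 2)),
      Function.Injective ψ ∧
      ∀ τ : Equiv.Perm (Fin (n + 2)), τ.IsSwap →
        ∃ v : Fin n → ZMod 2, Qform n v = 1 ∧
          ∀ w, (ψ τ) w = w + polarForm (Qform n) w v • v) ∧
    ¬ (∃ ψ : Equiv.Perm (Fin (n + 3)) →* ((Fin n → ZMod 2) ≃ₗ[ZMod 2] (Fin n → ZMod 2)),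
      Function.Injective ψ ∧
      ∀ τ : Equiv.Perm (Fin (n + 3)), τ.IsSwap →
        ∃ v : Fin n → ZMod 2, Qform n v = 1 ∧
          ∀ w, (ψ τ) w = w + polarForm (Qform n) w v • v) := by
  obtain ⟨m, rfl⟩ : ∃ m, n = 2 * m := ⟨n / 2, by omega⟩
  have hm : m % 4 = 3 := by omega
  have hodd : Odd m := Nat.odd_iff.mpr (by omega)
  refine ⟨⟨PlusType.permEquivHom hodd, PlusType.permEquivHom_injective hodd (by omega), ?_⟩, ?_⟩
  · rintro τ ⟨k, l, hkl, rfl⟩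
    refine ⟨PlusType.frame k + PlusType.frame l, PlusType.Qform_frame_add_frame hm hkl, fun w => ?_⟩
    rw [PlusType.polarForm_Qform, PlusType.permEquivHom_apply, PlusType.permRep_swap,
      LinearMap.transvection.apply]
    rfl
  · rintro ⟨ψ, hψ, hswap⟩
    have := LinearMap.BilinForm.le_finrank_of_injective_swap_eq_transvection
      PlusType.polarBilin_isAlt (even_two_mul (m + 1)) hψ fun τ hτ => by
        obtain ⟨v, -, hv⟩ := hswap τ hτ
        exact ⟨v, fun w => by rw [hv, PlusType.polarForm_Qform]⟩
    simp at this

/-- φ(O_n^{+}(2)) = n + 2 when n ≡ 6 (mod 8): S_{n+2} embeds with transpositions going to orthogonal transvections t_v with Q(v) = 1, while S_{n+3} does not. -/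
theorem phi_O_plus_2_mod8_six (n : ℕ) (hn : 6 ≤ n) (hmod : n % 8 = 6) :
    (∃ ψ : Equiv.Perm (Fin (n + 2)) →* ((Fin n → ZMod 2) ≃ₗ[ZMod 2] (Fin n → ZMod 2)),
      Function.Injective ψ ∧
      ∀ τ : Equiv.Perm (Fin (n + 2)), τ.IsSwap →
        ∃ v : Fin n → ZMod 2, Qform n v = 1 ∧
          ∀ w, (ψ τ) w = w + polarForm (Qform n) w v • v) ∧
    ¬ (∃ ψ : Equiv.Perm (Fin (n + 3)) →* ((Fin n → ZMod 2) ≃ₗ[ZMod 2] (Fin n → ZMod 2)),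
      Function.Injective ψ ∧
      ∀ τ : Equiv.Perm (Fin (n + 3)), τ.IsSwap →
        ∃ v : Fin n → ZMod 2, Qform n v = 1 ∧
          ∀ w, (ψ τ) w = w + polarForm (Qform n) w v • v) :=
  phi_O_plus_2_mod8_six_general n hmod
end

section
/- Let n ≥ 2 with n ≡ 2 (mod 4), and let V = (Fin n → ZMod 2). Define two quadratic forms Q₀ and Q₁ on V by Q_ε(x) = Σ_{i<j} x_i x_j + ε · Σ_i x_i for ε ∈ {0,1} (so both Q₀ and Q₁ have the same polar bilinear form B(x,y) = Σ_{i≠j} x_i y_j, and Q_ε(e_i) = ε on each standard basis vector e_i). Then Q₀ and Q₁ are not equivalent: there is no linear automorphism f of V such that Q₁(f(x)) = Q₀(x) for all x ∈ V. -/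
/-!
The character sum `∑ x, (-1) ^ Q x` of a quadratic form over `ZMod 2` is invariant under
equivalence. Splitting off the first coordinate gives `S₀ (n + 1) = S₀ n + S₁ n` and
`S₁ (n + 1) = S₁ n - S₀ n` for the sums `S_ε n` of `Q_ε`, whence `S₀ (2k) * S₁ (2k) = (-4) ^ k`.
For `n = 2k` with `k` odd this product is negative, so `S₀ n ≠ S₁ n`.
-/

/-- The quadratic form `Q_ε x = ∑_{i<j} x i * x j + ε * ∑ i, x i` on `(ZMod 2)^n`. -/
def Qeps (n : ℕ) (ε : ZMod 2) (x : Fin n → ZMod 2) : ZMod 2 :=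
  (∑ i : Fin n, ∑ j : Fin n, if i < j then x i * x j else 0) + ε * ∑ i : Fin n, x i

open Finset

def chi (z : ZMod 2) : ℤ := if z = 0 then 1 else -1

lemma chi_add (a b : ZMod 2) : chi (a + b) = chi a * chi b := by
  decide +revert

section CharSum

variable {V W : Type*} [Fintype V] [Fintype W]

def charSum (Q : V → ZMod 2) : ℤ := ∑ x, chi (Q x)

lemma charSum_comp_equiv (Q : W → ZMod 2) (f : V ≃ W) : charSum (Q ∘ f) = charSum Q :=
  f.sum_comp (chi ∘ Q)

lemma charSum_cons {n : ℕ} (Q : (Fin (n + 1) → ZMod 2) → ZMod 2) :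
    charSum Q = charSum (fun x => Q (Fin.cons 0 x)) + charSum (fun x => Q (Fin.cons 1 x)) := by
  rw [← charSum_comp_equiv Q (Fin.consEquiv fun _ => ZMod 2), charSum, Fintype.sum_prod_type]
  exact Fin.sum_univ_two _

end CharSum

lemma Qeps_cons (n : ℕ) (ε t : ZMod 2) (x : Fin n → ZMod 2) :
    Qeps (n + 1) ε (Fin.cons t x) = Qeps n ε x + t * (∑ i, x i + ε) := by
  simp only [Qeps, Fin.sum_univ_succ, Fin.cons_zero, Fin.cons_succ, Fin.succ_lt_succ_iff,
    Fin.succ_pos, if_true, Fin.not_lt_zero, if_false, sum_add_distrib, ← mul_sum, sum_const_zero]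
  ring

lemma Qeps_add_one (n : ℕ) (ε : ZMod 2) (x : Fin n → ZMod 2) :
    Qeps n (ε + 1) x = Qeps n ε x + ∑ i, x i := by
  simp only [Qeps]; ring

lemma charSum_Qeps_succ (n : ℕ) (ε : ZMod 2) :
    charSum (Qeps (n + 1) ε) = charSum (Qeps n ε) + chi ε * charSum (Qeps n (ε + 1)) := by
  simp only [charSum_cons, Qeps_cons, zero_mul, add_zero, one_mul]
  congr 1
  rw [charSum, charSum, mul_sum]
  refine sum_congr rfl fun x _ => ?_
  rw [← add_assoc, chi_add, Qeps_add_one, mul_comm]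

lemma charSum_Qeps_zero_succ (n : ℕ) :
    charSum (Qeps (n + 1) 0) = charSum (Qeps n 0) + charSum (Qeps n 1) := by
  simpa [chi] using charSum_Qeps_succ n 0

lemma charSum_Qeps_one_succ (n : ℕ) :
    charSum (Qeps (n + 1) 1) = charSum (Qeps n 1) - charSum (Qeps n 0) := by
  rw [charSum_Qeps_succ, show (1 + 1 : ZMod 2) = 0 by decide, show chi 1 = -1 from rfl]
  ring

lemma charSum_Qeps_zero_mul_one (k : ℕ) :
    charSum (Qeps (2 * k) 0) * charSum (Qeps (2 * k) 1) = (-4) ^ k := by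
  induction k with
  | zero => simp [charSum, Qeps, chi]
  | succ k ih =>
    rw [show 2 * (k + 1) = 2 * k + 1 + 1 by ring, charSum_Qeps_zero_succ (2 * k + 1),
      charSum_Qeps_one_succ (2 * k + 1), charSum_Qeps_zero_succ, charSum_Qeps_one_succ, pow_succ]
    linear_combination (-4 : ℤ) * ih

lemma charSum_Qeps_zero_ne_one {n : ℕ} (hn : n % 4 = 2) :
    charSum (Qeps n 0) ≠ charSum (Qeps n 1) := by
  obtain ⟨m, rfl⟩ : ∃ m, n = 2 * (2 * m + 1) := ⟨n / 4, by omega⟩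
  intro h
  have hneg : (-4 : ℤ) ^ (2 * m + 1) < 0 := Odd.pow_neg (odd_two_mul_add_one m) (by norm_num)
  rw [← charSum_Qeps_zero_mul_one, ← h] at hneg
  exact (mul_self_nonneg _).not_gt hneg

theorem quadratic_forms_not_equivalent_general (n : ℕ) (hmod : n % 4 = 2) :
    ¬ ∃ f : (Fin n → ZMod 2) ≃ₗ[ZMod 2] (Fin n → ZMod 2),
        ∀ x : Fin n → ZMod 2, Qeps n 1 (f x) = Qeps n 0 x := by
  rintro ⟨f, hf⟩
  apply charSum_Qeps_zero_ne_one hmod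
  rw [← charSum_comp_equiv (Qeps n 1) f.toEquiv]
  exact congrArg charSum (funext fun x => (hf x).symm)

/-- For `n ≡ 2 (mod 4)`, the two quadratic forms `Q₀` and `Q₁` on
`(ZMod 2)^n` given by `Q_ε x = ∑_{i<j} x i * x j + ε * ∑ i, x i` (which share the same
polar bilinear form) are not equivalent: no linear automorphism `f` satisfies
`Q₁ (f x) = Q₀ x` for all `x`. -/
theorem quadratic_forms_not_equivalent (n : ℕ) (hn : 2 ≤ n) (hmod : n % 4 = 2) :
    ¬ ∃ f : (Fin n → ZMod 2) ≃ₗ[ZMod 2] (Fin n → ZMod 2),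
        ∀ x : Fin n → ZMod 2, Qeps n 1 (f x) = Qeps n 0 x :=
  quadratic_forms_not_equivalent_general n hmod
end
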